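/- arXiv:1907.03501 — 5 statements merged into one kernel-verified Lean document; each statement's English description precedes it below -/
import Mathlib

section
/- Let k, N ∈ ℕ with 1 ≤ k < N, let U ⊂ ℝ^N be a k-dimensional linear subspace, and let K ⊂ U be a bounded set. Then there exist an (N−1)-dimensional rational linear subspace Q ⊂ ℝ^N and a vector b ∈ ℝ^N such that π(K) ∩ π(Q + b) = ∅, where π : ℝ^N → 𝕋^N = ℝ^N/ℤ^N is the canonical projection. -/
/-!
Since `dim U < N`, some `w ≠ 0` satisfies `w ⬝ᵥ u = 0` on `U`. The set of `x` with
`|x ⬝ᵥ u| < 1/2` for all `u ∈ K` is then convex, symmetric, and contains a tube around the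
line `ℝ w` (as `K` is bounded), so it has infinite volume and Minkowski's theorem yields a nonzero
integer vector `a` in it. Take `Q = {x | a ⬝ᵥ x = 0}`, which is rational, and `b` with
`a ⬝ᵥ b = 1/2`: the functional `a ⬝ᵥ ·` lies in `1/2 + ℤ` on `Q + b + ℤ^N`, but in
`(-1/2, 1/2)` on `K`.
-/

open Module Set

noncomputable section

/-- The integer lattice `ℤ^N` as an additive subgroup of `ℝ^N`. -/
def intLat (N : ℕ) : AddSubgroup (Fin N → ℝ) :=
  AddSubgroup.pi Set.univ fun _ => AddSubgroup.zmultiples (1 : ℝ)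

/-- The torus `𝕋^N = ℝ^N / ℤ^N`. -/
abbrev Torus (N : ℕ) := (Fin N → ℝ) ⧸ intLat N

/-- A subspace of `ℝ^N` is rational if it is spanned by vectors with rational
coordinates. -/
def IsRationalSubspace {N : ℕ} (Q : Submodule ℝ (Fin N → ℝ)) : Prop :=
  ∃ S : Set (Fin N → ℚ),
    Q = Submodule.span ℝ ((fun v : Fin N → ℚ => fun i => (v i : ℝ)) '' S)

open Metric MeasureTheory Function Topology

theorem measure_eq_top_of_forall_ball_nsmul_subset {E : Type*} [NormedAddCommGroup E]
    [NormedSpace ℝ E] [MeasurableSpace E] [BorelSpace E] (μ : Measure E) [μ.IsAddHaarMeasure]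
    {s : Set E} {v : E} {δ : ℝ} (hδ : 0 < δ) (hv : 2 * δ ≤ ‖v‖)
    (hs : ∀ n : ℕ, ball ((n : ℝ) • v) δ ⊆ s) : μ s = ⊤ := by
  have hdisj : Pairwise (Disjoint on fun n : ℕ => ball ((n : ℝ) • v) δ) := by
    intro n m hnm
    refine ball_disjoint_ball ?_
    have : (1 : ℝ) ≤ |(n : ℝ) - m| := by
      rw [← Int.cast_natCast n, ← Int.cast_natCast m, ← Int.cast_sub, ← Int.cast_abs]
      exact_mod_cast Int.one_le_abs (sub_ne_zero.2 (Nat.cast_injective.ne hnm))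
    rw [dist_eq_norm, ← sub_smul, norm_smul, Real.norm_eq_abs]
    nlinarith [norm_nonneg v]
  have hunion : μ (⋃ n : ℕ, ball ((n : ℝ) • v) δ) = ⊤ := by
    rw [measure_iUnion hdisj fun _ => measurableSet_ball]
    simp_rw [Measure.addHaar_ball_center μ]
    exact ENNReal.tsum_const_eq_top_of_ne_zero (measure_ball_pos μ 0 hδ).ne'
  exact top_le_iff.mp (hunion ▸ measure_mono (iUnion_subset hs))

section
variable {ι : Type*} [Fintype ι]

theorem exists_ne_zero_int_point_mem_of_volume_eq_top {s : Set (ι → ℝ)}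
    (h_symm : ∀ x ∈ s, -x ∈ s) (h_conv : Convex ℝ s) (hs : volume s = ⊤) :
    ∃ x, x ≠ 0 ∧ x ∈ s ∧ ∀ i, ∃ z : ℤ, (z : ℝ) = x i := by
  let b := Pi.basisFun ℝ ι
  have : Countable (Submodule.span ℤ (range b)).toAddSubgroup :=
    inferInstanceAs (Countable (Submodule.span ℤ (range b)))
  have h : volume (ZSpan.fundamentalDomain b) * 2 ^ finrank ℝ (ι → ℝ) < volume s :=
    hs ▸ ENNReal.mul_lt_top (ZSpan.fundamentalDomain_isBounded b).measure_lt_top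
      (ENNReal.pow_lt_top ENNReal.ofNat_lt_top)
  obtain ⟨⟨x, hxL⟩, hx0, hxs⟩ := exists_ne_zero_mem_lattice_of_measure_mul_two_pow_lt_measure
    (ZSpan.isAddFundamentalDomain' b volume) h_symm h_conv h
  have hint : ∀ i, ∃ z : ℤ, (z : ℝ) = x i := fun i => by
    simpa [b] using (b.mem_span_iff_repr_mem ℤ x).mp hxL i
  exact ⟨x, fun h0 => hx0 (Subtype.ext h0), hxs, hint⟩

theorem abs_dotProduct_le_card_mul_norm_mul_norm (x u : ι → ℝ) :
    |x ⬝ᵥ u| ≤ Fintype.card ι * (‖x‖ * ‖u‖) := by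
  calc |x ⬝ᵥ u| ≤ ∑ i, |x i| * |u i| := by
        simpa only [dotProduct, abs_mul] using Finset.abs_sum_le_sum_abs (fun i => x i * u i) _
    _ ≤ ∑ _i : ι, ‖x‖ * ‖u‖ := Finset.sum_le_sum fun i _ =>
        mul_le_mul (norm_le_pi_norm x i) (norm_le_pi_norm u i) (abs_nonneg _) (norm_nonneg _)
    _ = Fintype.card ι * (‖x‖ * ‖u‖) := by simp

def halfPolar (K : Set (ι → ℝ)) : Set (ι → ℝ) := {x | ∀ u ∈ K, |x ⬝ᵥ u| < 1 / 2}

variable {K : Set (ι → ℝ)}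

theorem neg_mem_halfPolar {x : ι → ℝ} (hx : x ∈ halfPolar K) : -x ∈ halfPolar K :=
  fun u hu => by simpa only [neg_dotProduct, abs_neg] using hx u hu

theorem convex_halfPolar : Convex ℝ (halfPolar K) := by
  have : halfPolar K = ⋂ u ∈ K, (dotProductBilin ℝ ℝ).flip u ⁻¹' Ioo (-(1 / 2)) (1 / 2) := by
    ext x
    simp [halfPolar, abs_lt]
  rw [this]
  exact convex_iInter₂ fun u _ => (convex_Ioo _ _).linear_preimage _

theorem add_smul_mem_halfPolar {w x : ι → ℝ} (hw : ∀ u ∈ K, w ⬝ᵥ u = 0)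
    (hx : x ∈ halfPolar K) (t : ℝ) : x + t • w ∈ halfPolar K := by
  intro u hu
  simpa only [add_dotProduct, smul_dotProduct, hw u hu, smul_zero, add_zero] using hx u hu

theorem halfPolar_mem_nhds_zero (hK : Bornology.IsBounded K) : halfPolar K ∈ 𝓝 0 := by
  obtain ⟨R, hR⟩ := isBounded_iff_forall_norm_le.mp hK
  set C := Fintype.card ι * max R 0 with hC
  have hC0 : 0 ≤ C := by positivity
  refine mem_nhds_iff.mpr ⟨1 / (2 * (C + 1)), by positivity, fun x hx u hu => ?_⟩
  have hx : ‖x‖ < 1 / (2 * (C + 1)) := by simpa using hx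
  calc |x ⬝ᵥ u| ≤ Fintype.card ι * (‖x‖ * ‖u‖) := abs_dotProduct_le_card_mul_norm_mul_norm x u
    _ ≤ C * ‖x‖ := by
        rw [hC, mul_comm ‖x‖, ← mul_assoc]
        gcongr
        exact (hR u hu).trans (le_max_left _ _)
    _ < (C + 1) * (1 / (2 * (C + 1))) := by
        gcongr
        linarith
    _ = 1 / 2 := by field_simp

theorem volume_halfPolar_eq_top (hK : Bornology.IsBounded K) {w : ι → ℝ} (hw0 : w ≠ 0)
    (hw : ∀ u ∈ K, w ⬝ᵥ u = 0) : volume (halfPolar K) = ⊤ := by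
  obtain ⟨δ, hδ, hball⟩ := Metric.mem_nhds_iff.mp (halfPolar_mem_nhds_zero hK)
  have hw_pos : 0 < ‖w‖ := norm_pos_iff.mpr hw0
  have hδw : 2 * min δ (‖w‖ / 2) ≤ ‖w‖ := by
    have := min_le_right δ (‖w‖ / 2)
    linarith
  refine measure_eq_top_of_forall_ball_nsmul_subset volume (by positivity) hδw fun n y hy => ?_
  have hy' : y - (n : ℝ) • w ∈ ball 0 δ := by
    rw [mem_ball_zero_iff, ← dist_eq_norm]
    exact (mem_ball.mp hy).trans_le (min_le_left _ _)
  simpa using add_smul_mem_halfPolar hw (hball hy') n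

end

theorem ker_dotProductEquiv_eq_span {K ι : Type*} [Field K] [Fintype ι] [DecidableEq ι]
    {a : ι → K} {i₀ : ι} (hi₀ : a i₀ ≠ 0) :
    LinearMap.ker (dotProductEquiv K ι a) =
      Submodule.span K (range fun i => a i₀ • Pi.single i 1 - a i • Pi.single i₀ 1) := by
  apply le_antisymm
  · intro x hx
    rw [LinearMap.mem_ker, dotProductEquiv_apply_apply, dotProduct] at hx
    have hsum : ∑ i, x i • (a i₀ • Pi.single i 1 - a i • Pi.single i₀ 1) = a i₀ • x := by
      ext j
      by_cases hj : j = i₀ <;> simp [Finset.sum_apply, Pi.single_apply, hj, mul_comm, mul_sub, hx]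
    rw [← inv_smul_smul₀ hi₀ x, ← hsum]
    exact Submodule.smul_mem _ _ (Submodule.sum_mem _ fun i _ =>
      Submodule.smul_mem _ _ (Submodule.subset_span (mem_range_self i)))
  · rw [Submodule.span_le]
    rintro _ ⟨i, rfl⟩
    simp [dotProduct_sub, dotProduct_smul, mul_comm]

theorem finrank_ker_dotProductEquiv {K ι : Type*} [Field K] [Fintype ι] [DecidableEq ι]
    {a : ι → K} (ha : a ≠ 0) :
    finrank K (LinearMap.ker (dotProductEquiv K ι a)) = Fintype.card ι - 1 := by
  have := Module.Dual.finrank_ker_add_one_of_ne_zero ((dotProductEquiv K ι).map_ne_zero_iff.mpr ha)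
  rw [finrank_fintype_fun_eq_card] at this
  omega

theorem isRationalSubspace_ker_dotProductEquiv {N : ℕ} {a : Fin N → ℝ} (ha : a ≠ 0)
    (ha_rat : ∀ i, ∃ q : ℚ, (q : ℝ) = a i) :
    IsRationalSubspace (LinearMap.ker (dotProductEquiv ℝ (Fin N) a)) := by
  choose α hα using ha_rat
  obtain ⟨i₀, hi₀⟩ := Function.ne_iff.mp ha
  refine ⟨range fun i => α i₀ • Pi.single i 1 - α i • Pi.single i₀ 1, ?_⟩
  rw [ker_dotProductEquiv_eq_span hi₀, ← range_comp]
  congr 2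
  ext i j
  simp [← hα, Pi.single_apply, apply_ite (Rat.cast : ℚ → ℝ)]

theorem mem_intLat_iff {N : ℕ} {a : Fin N → ℝ} :
    a ∈ intLat N ↔ ∀ i, ∃ z : ℤ, (z : ℝ) = a i := by
  simp [intLat, AddSubgroup.mem_pi, AddSubgroup.mem_zmultiples_iff]

theorem exists_intCast_eq_dotProduct_of_mem_intLat {N : ℕ} {a m : Fin N → ℝ} (ha : a ∈ intLat N)
    (hm : m ∈ intLat N) : ∃ z : ℤ, (z : ℝ) = a ⬝ᵥ m := by
  choose A hA using mem_intLat_iff.mp ha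
  choose M hM using mem_intLat_iff.mp hm
  exact ⟨∑ i, A i * M i, by simp [dotProduct, ← hA, ← hM]⟩

theorem mk_image_inter_mk_image_coset_ker_eq_empty {N : ℕ} {K : Set (Fin N → ℝ)}
    {a b : Fin N → ℝ} (ha : a ∈ intLat N) (haK : a ∈ halfPolar K) (hb : a ⬝ᵥ b = 1 / 2) :
    QuotientAddGroup.mk' (intLat N) '' K ∩
      QuotientAddGroup.mk' (intLat N) ''
        ((fun q => q + b) '' (LinearMap.ker (dotProductEquiv ℝ (Fin N) a) : Set (Fin N → ℝ)))
      = ∅ := by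
  refine eq_empty_iff_forall_notMem.mpr ?_
  rintro _ ⟨⟨x, hxK, rfl⟩, _, ⟨q, hq, rfl⟩, hqx⟩
  obtain ⟨m, hm, rfl⟩ := (QuotientAddGroup.mk'_eq_mk' _).mp hqx
  obtain ⟨z, hz⟩ := exists_intCast_eq_dotProduct_of_mem_intLat ha hm
  rw [SetLike.mem_coe, LinearMap.mem_ker, dotProductEquiv_apply_apply] at hq
  have hx := abs_lt.mp (haK _ hxK)
  rw [dotProduct_add, dotProduct_add, hq, hb, ← hz] at hx
  have hz₁ : (-1 : ℤ) < z := by exact_mod_cast (by linarith : (-1 : ℝ) < z)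
  have hz₂ : z < 0 := by exact_mod_cast (by linarith : (z : ℝ) < 0)
  omega

theorem exists_rational_hyperplane_coset_avoiding_window_general
    {k N : ℕ} (hkN : k < N)
    (U : Submodule ℝ (Fin N → ℝ)) (hU : finrank ℝ U = k)
    (K : Set (Fin N → ℝ)) (hKU : K ⊆ (U : Set (Fin N → ℝ)))
    (hK : Bornology.IsBounded K) :
    ∃ Q : Submodule ℝ (Fin N → ℝ), IsRationalSubspace Q ∧ finrank ℝ Q = N - 1 ∧
      ∃ b : Fin N → ℝ,
        (QuotientAddGroup.mk' (intLat N) '' K) ∩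
          (QuotientAddGroup.mk' (intLat N) ''
            ((fun q => q + b) '' (Q : Set (Fin N → ℝ)))) = ∅ := by
  have hU_lt : U < ⊤ := lt_top_iff_ne_top.mpr fun hU_top => by
    rw [hU_top, finrank_top, finrank_fin_fun] at hU
    omega
  obtain ⟨f, hf0, hUf⟩ := U.exists_le_ker_of_lt_top hU_lt
  set w := (dotProductEquiv ℝ (Fin N)).symm f
  have hwK : ∀ u ∈ K, w ⬝ᵥ u = 0 := fun u hu => by
    rw [← dotProductEquiv_apply_apply, LinearEquiv.apply_symm_apply]
    exact hUf (hKU hu)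
  obtain ⟨a, ha0, haK, ha_int⟩ := exists_ne_zero_int_point_mem_of_volume_eq_top
    (fun _ => neg_mem_halfPolar) convex_halfPolar
    (volume_halfPolar_eq_top hK (by simpa [w] using hf0) hwK)
  obtain ⟨i₀, hi₀⟩ : ∃ i, a i ≠ 0 := Function.ne_iff.mp ha0
  have hb : a ⬝ᵥ ((2 * a i₀)⁻¹ • Pi.single i₀ 1) = 1 / 2 := by
    rw [dotProduct_smul, dotProduct_single, mul_one, smul_eq_mul]
    field_simp
  refine ⟨_, isRationalSubspace_ker_dotProductEquiv ha0 fun i => ?_,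
    by rw [finrank_ker_dotProductEquiv ha0, Fintype.card_fin], _,
    mk_image_inter_mk_image_coset_ker_eq_empty (mem_intLat_iff.mpr ha_int) haK hb⟩
  obtain ⟨z, hz⟩ := ha_int i
  exact ⟨z, by exact_mod_cast hz⟩

/-- For `1 ≤ k < N`, a `k`-dimensional subspace `U ⊆ ℝ^N` and a bounded set `K ⊆ U`,
there are an `(N-1)`-dimensional rational subspace `Q` and a vector `b` such that
`π(K)` and `π(Q + b)` are disjoint in the torus `𝕋^N`. -/
theorem exists_rational_hyperplane_coset_avoiding_window
    {k N : ℕ} (hk : 1 ≤ k) (hkN : k < N)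
    (U : Submodule ℝ (Fin N → ℝ)) (hU : finrank ℝ U = k)
    (K : Set (Fin N → ℝ)) (hKU : K ⊆ (U : Set (Fin N → ℝ)))
    (hK : Bornology.IsBounded K) :
    ∃ Q : Submodule ℝ (Fin N → ℝ), IsRationalSubspace Q ∧ finrank ℝ Q = N - 1 ∧
      ∃ b : Fin N → ℝ,
        (QuotientAddGroup.mk' (intLat N) '' K) ∩
          (QuotientAddGroup.mk' (intLat N) ''
            ((fun q => q + b) '' (Q : Set (Fin N → ℝ)))) = ∅ :=
  exists_rational_hyperplane_coset_avoiding_window_general hkN U hU K hKU hK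
end
end

section
/- Let d ≥ 1 and s ≥ d + 1, and let Φ : [1, ∞) → (0, ∞) be non-increasing with limit 0 at infinity, satisfying liminf_{T→∞} Φ(2T)/Φ(T) > 0 and ∑_{m=1}^∞ 2^{m d (s+1)} Φ(2^m)^{s−d} < ∞. Then for Lebesgue-almost every s-tuple Θ = (θ₁, …, θ_s) ∈ (ℝ^d)^s there exists c = c(Θ) > 0 such that Θ is uniformly Diophantine of type c·Φ. -/
/-!
Call `Θ` bad at scale `m` if some `ξ` admits, for every `i`, a nonzero `u` with
`‖u‖_∞ ≤ T = 2^(m+1)` and `‖u·(ξ - θᵢ)‖ < ε = Φ(2^m)`. Moving `ξ` to a grid of about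
`(dT/ε)^d` points costs at most `ε`. For a fixed grid point the `θᵢ` are independent, and each
lies in the union over the `(2T+1)^d` vectors `u` of the sets `‖u·(ξ - θ)‖ < 2ε`, which meet a
unit cube in volume `≪ ε` (Fubini in a coordinate where `u` is nonzero). So inside a unit cube
the bad set at scale `m` has measure `≪ 2^(md(s+1)) Φ(2^m)^(s-d)`, and by Borel–Cantelli almost
every `Θ` is bad at only finitely many scales. If `Θ` is good at all scales `m ≥ M`,
monotonicity of `Φ` makes it uniformly Diophantine of type `c Φ` with `c = Φ(2^M) / Φ(1)`.
-/

open Module Set MeasureTheory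

noncomputable section

/-- Distance from a real number to the nearest integer. -/
def intDist (x : ℝ) : ℝ := |x - round x|

/-- `Θ = (θ₁, …, θ_s)` is *uniformly Diophantine of type `Φ`*: for every `T ≥ 1` and
every `ξ ∈ ℝ^d` there is an index `i` such that for all nonzero `u ∈ ℤ^d` with
`‖u‖_∞ ≤ T`, the distance from `u·(ξ - θᵢ)` to the nearest integer is at least
`Φ T`. -/
def UniformlyDiophantine (d s : ℕ) (Φ : ℝ → ℝ) (θ : Fin s → Fin d → ℝ) : Prop :=
  ∀ T : ℝ, 1 ≤ T → ∀ ξ : Fin d → ℝ, ∃ i : Fin s,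
    ∀ u : Fin d → ℤ, u ≠ 0 → (∀ j, (|u j| : ℝ) ≤ T) →
      Φ T ≤ intDist (∑ j, (u j : ℝ) * (ξ j - θ i j))

open scoped ENNReal

theorem intDist_add_intCast (x : ℝ) (k : ℤ) : intDist (x + k) = intDist x := by
  simp only [intDist, round_add_intCast, Int.cast_add]
  ring_nf

theorem intDist_le_intDist_add_abs_sub (x y : ℝ) : intDist x ≤ intDist y + |x - y| := by
  calc intDist x ≤ |x - round y| := round_le x (round y)
    _ ≤ |x - y| + |y - round y| := abs_sub_le _ _ _
    _ = intDist y + |x - y| := add_comm _ _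

theorem intDist_le_intDist_add_abs_sub_sub_intCast (x y : ℝ) (k : ℤ) :
    intDist x ≤ intDist y + |x - y - k| := by
  have := intDist_le_intDist_add_abs_sub (x + (-k : ℤ)) y
  rwa [intDist_add_intCast, Int.cast_neg, ← sub_eq_add_neg, sub_right_comm] at this

@[fun_prop]
theorem measurable_intDist : Measurable intDist := by
  have : Measurable fun x : ℝ => (round x : ℝ) := by
    simp only [round_eq]
    exact measurable_from_top.comp (Int.measurable_floor.comp (measurable_id.add_const _))
  exact (measurable_id.sub this).abs

theorem card_Icc_ceil_floor_le {x y : ℝ} (h : x ≤ y + 1) :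
    ((Finset.Icc ⌈x⌉ ⌊y⌋).card : ℝ) ≤ y - x + 1 := by
  rw [Int.card_Icc, ← Int.cast_natCast, Int.toNat_eq_max, Int.cast_max, Int.cast_zero]
  refine max_le ?_ (by linarith)
  push_cast
  linarith [Int.floor_le y, Int.le_ceil x]

theorem Icc_inter_intDist_lt_subset_iUnion_ball {w : ℤ} (hw : w ≠ 0) (a b η : ℝ) :
    Icc b (b + 1) ∩ {t | intDist (a + w * t) < η} ⊆
      ⋃ k ∈ Finset.Icc ⌈a + w * (b + 1 / 2) - (|(w : ℝ)| / 2 + η)⌉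
          ⌊a + w * (b + 1 / 2) + (|(w : ℝ)| / 2 + η)⌋,
        Metric.ball ((k - a) / w) (η / |(w : ℝ)|) := by
  have hW : 0 < |(w : ℝ)| := abs_pos.2 (Int.cast_ne_zero.2 hw)
  rintro t ⟨⟨htb, htb'⟩, ht⟩
  -- `t` is within `η / |w|` of the solution of `a + w t = k`, for `k` the integer nearest `a + w t`
  set k := round (a + w * t)
  have hk : |a + w * t - k| < η := ht
  have hwt : |(w : ℝ) * (t - (b + 1 / 2))| ≤ |(w : ℝ)| / 2 := by
    rw [abs_mul, div_eq_mul_one_div |(w : ℝ)|]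
    exact mul_le_mul_of_nonneg_left (abs_le.2 ⟨by linarith, by linarith⟩) (abs_nonneg _)
  have hkc : |(k : ℝ) - (a + w * (b + 1 / 2))| < |(w : ℝ)| / 2 + η :=
    calc |(k : ℝ) - (a + w * (b + 1 / 2))| = |(w : ℝ) * (t - (b + 1 / 2)) - (a + w * t - k)| := by
          congr 1; ring
      _ ≤ |(w : ℝ) * (t - (b + 1 / 2))| + |a + w * t - k| := abs_sub _ _
      _ < |(w : ℝ)| / 2 + η := by linarith
  rw [abs_sub_lt_iff] at hkc
  refine mem_biUnion (x := k) (Finset.mem_Icc.2 ⟨Int.ceil_le.2 ?_, Int.le_floor.2 ?_⟩) ?_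
  · linarith
  · linarith
  rw [Metric.mem_ball, Real.dist_eq, lt_div_iff₀ hW]
  calc |t - (k - a) / w| * |(w : ℝ)| = |a + w * t - k| := by
        rw [← abs_mul]; congr 1; field_simp; ring
    _ < η := hk

theorem volume_Icc_inter_intDist_lt_le {w : ℤ} (hw : w ≠ 0) (a b : ℝ) {η : ℝ} (hη : 0 ≤ η) :
    volume (Icc b (b + 1) ∩ {t | intDist (a + w * t) < η}) ≤ .ofReal (4 * η * (1 + η)) := by
  set W : ℝ := |(w : ℝ)|
  have hW : 1 ≤ W := by simp only [W, ← Int.cast_abs]; exact_mod_cast Int.one_le_abs hw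
  set K := Finset.Icc ⌈a + w * (b + 1 / 2) - (W / 2 + η)⌉ ⌊a + w * (b + 1 / 2) + (W / 2 + η)⌋
  have hK : (K.card : ℝ) ≤ W + 2 * η + 1 := by
    have := card_Icc_ceil_floor_le (x := a + w * (b + 1 / 2) - (W / 2 + η))
      (y := a + w * (b + 1 / 2) + (W / 2 + η)) (by linarith)
    linarith
  calc volume (Icc b (b + 1) ∩ {t | intDist (a + w * t) < η})
      ≤ ∑ k ∈ K, volume (Metric.ball (((k : ℝ) - a) / w) (η / W)) :=
        (measure_mono (Icc_inter_intDist_lt_subset_iUnion_ball hw a b η)).trans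
          (measure_biUnion_finset_le _ _)
    _ = .ofReal (K.card * (2 * (η / W))) := by
        simp [Real.volume_ball, ENNReal.ofReal_mul]
    _ ≤ .ofReal (4 * η * (1 + η)) := by
        refine ENNReal.ofReal_le_ofReal ?_
        calc (K.card : ℝ) * (2 * (η / W)) ≤ (W + 2 * η + 1) * (2 * (η / W)) := by gcongr
          _ = 2 * η + (2 * η + 1) / W * (2 * η) := by field_simp; ring
          _ ≤ 2 * η + (2 * η + 1) * (2 * η) := by
              gcongr; exact div_le_self (by positivity) hW
          _ = 4 * η * (1 + η) := by ring

theorem volume_le_of_slice_le_indicator {n : ℕ} (j : Fin (n + 1)) {S : Set (Fin (n + 1) → ℝ)}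
    (hS : MeasurableSet S) {C : Set (Fin n → ℝ)} (hC : MeasurableSet C) (c : ℝ≥0∞)
    (hslice : ∀ y, volume {t | j.insertNth t y ∈ S} ≤ C.indicator (fun _ => c) y) :
    volume S ≤ c * volume C := by
  have he := (volume_preserving_piFinSuccAbove (fun _ : Fin (n + 1) => ℝ) j).symm
  calc volume S = volume ((MeasurableEquiv.piFinSuccAbove (fun _ => ℝ) j).symm ⁻¹' S) :=
        (he.measure_preimage_equiv S).symm
    _ = ∫⁻ y, volume {t | j.insertNth t y ∈ S} :=
        Measure.prod_apply_symm (hS.preimage (MeasurableEquiv.measurable _))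
    _ ≤ ∫⁻ y, C.indicator (fun _ => c) y := lintegral_mono hslice
    _ = c * volume C := lintegral_indicator_const hC c

theorem volume_Icc_inter_intDist_dot_lt_le {d : ℕ} {u : Fin d → ℤ} {j : Fin d} (hj : u j ≠ 0)
    (ξ p : Fin d → ℝ) {η : ℝ} (hη : 0 ≤ η) :
    volume (Icc p (p + 1) ∩ {φ | intDist (∑ i, u i * (ξ i - φ i)) < η}) ≤
      .ofReal (4 * η * (1 + η)) := by
  cases d with
  | zero => exact j.elim0
  | succ n =>
  set C : Set (Fin n → ℝ) := Icc (fun k => p (j.succAbove k)) (fun k => (p + 1) (j.succAbove k))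
  have hC : volume C = 1 := by simp [C, Real.volume_Icc_pi]
  have hS : MeasurableSet (Icc p (p + 1) ∩ {φ | intDist (∑ i, u i * (ξ i - φ i)) < η}) :=
    measurableSet_Icc.inter (measurableSet_lt (by fun_prop) measurable_const)
  refine (volume_le_of_slice_le_indicator j hS measurableSet_Icc _ fun y => ?_).trans
    (by rw [hC, mul_one])
  by_cases hy : y ∈ C
  · rw [indicator_of_mem hy]
    refine (measure_mono fun t ht => ?_).trans (volume_Icc_inter_intDist_lt_le (neg_ne_zero.2 hj)
      (u j * ξ j + ∑ k, u (j.succAbove k) * (ξ (j.succAbove k) - y k)) (p j) hη)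
    obtain ⟨hmem, hsmall⟩ := ht
    refine ⟨(Fin.insertNth_mem_Icc.1 hmem).1, ?_⟩
    simp only [mem_ofPred_eq, Fin.sum_univ_succAbove _ j, Fin.insertNth_apply_same,
      Fin.insertNth_apply_succAbove] at hsmall ⊢
    convert hsmall using 2
    push_cast
    ring
  · rw [indicator_of_notMem hy]
    refine (measure_mono (t := ∅) fun t ht => hy (Fin.insertNth_mem_Icc.1 ht.1).2).trans ?_
    rw [measure_empty]

def approxSet {d : ℕ} (ξ : Fin d → ℝ) (ε T : ℝ) : Set (Fin d → ℝ) :=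
  {φ | ∃ u : Fin d → ℤ, u ≠ 0 ∧ (∀ j, (|u j| : ℝ) ≤ T) ∧ intDist (∑ j, u j * (ξ j - φ j)) < ε}

theorem volume_Icc_inter_approxSet_le {d : ℕ} (ξ p : Fin d → ℝ) {η : ℝ} (hη : 0 ≤ η) (T : ℕ) :
    volume (Icc p (p + 1) ∩ approxSet ξ η T) ≤
      .ofReal ((2 * T + 1) ^ d * (4 * η * (1 + η))) := by
  set U := (Finset.Icc (fun _ : Fin d => -(T : ℤ)) fun _ => (T : ℤ)).erase 0
  have hcover : Icc p (p + 1) ∩ approxSet ξ η T ⊆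
      ⋃ u ∈ U, Icc p (p + 1) ∩ {φ | intDist (∑ j, u j * (ξ j - φ j)) < η} := by
    rintro φ ⟨hφ, u, hu, huT, hsmall⟩
    have huT' (j : Fin d) : |u j| ≤ (T : ℤ) := by exact_mod_cast huT j
    exact mem_biUnion (Finset.mem_erase.2 ⟨hu, Finset.mem_Icc.2
      ⟨fun j => (abs_le.1 (huT' j)).1, fun j => (abs_le.1 (huT' j)).2⟩⟩) ⟨hφ, hsmall⟩
  have hcard : (U.card : ℝ) ≤ (2 * T + 1) ^ d := by
    calc (U.card : ℝ) ≤ (Finset.Icc (fun _ : Fin d => -(T : ℤ)) fun _ => (T : ℤ)).card := by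
          exact_mod_cast Finset.card_erase_le
      _ = (2 * T + 1) ^ d := by
          rw [Pi.card_Icc, Int.card_Icc, Finset.prod_const, Finset.card_univ, Fintype.card_fin,
            show ((T : ℤ) + 1 - -T).toNat = 2 * T + 1 by omega]
          push_cast; rfl
  calc volume (Icc p (p + 1) ∩ approxSet ξ η T)
      ≤ ∑ u ∈ U, volume (Icc p (p + 1) ∩ {φ | intDist (∑ j, u j * (ξ j - φ j)) < η}) :=
        (measure_mono hcover).trans (measure_biUnion_finset_le _ _)
    _ ≤ ∑ _u ∈ U, .ofReal (4 * η * (1 + η)) := by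
        refine Finset.sum_le_sum fun u hu => ?_
        obtain ⟨j, hj⟩ := Function.ne_iff.1 (Finset.ne_of_mem_erase hu)
        exact volume_Icc_inter_intDist_dot_lt_le hj ξ p hη
    _ ≤ .ofReal ((2 * T + 1) ^ d * (4 * η * (1 + η))) := by
        rw [Finset.sum_const, nsmul_eq_mul, ← ENNReal.ofReal_natCast,
          ← ENNReal.ofReal_mul (Nat.cast_nonneg _)]
        exact ENNReal.ofReal_le_ofReal (by gcongr)

theorem abs_floor_mul_div_sub_le {x : ℝ} (hx : 0 ≤ x) {N : ℕ} (hN : 0 < N) :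
    |(⌊x * N⌋₊ : ℝ) / N - x| ≤ 1 / N := by
  have hN' : (0 : ℝ) < N := by exact_mod_cast hN
  rw [show (⌊x * N⌋₊ : ℝ) / N - x = (⌊x * N⌋₊ - x * N) / N by field_simp, abs_div,
    abs_of_pos hN']
  gcongr
  rw [abs_le]
  constructor <;> linarith [Nat.floor_le (mul_nonneg hx hN'.le), Nat.lt_floor_add_one (x * N)]

theorem exists_grid_approxSet_subset {d : ℕ} (ξ : Fin d → ℝ) {N : ℕ} (hN : 0 < N) (ε : ℝ) {T : ℝ} :
    ∃ a ∈ Fintype.piFinset fun _ : Fin d => Finset.range N,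
      approxSet ξ ε T ⊆ approxSet (fun j => (a j : ℝ) / N) (ε + d * T / N) T := by
  have hN' : (0 : ℝ) < N := by exact_mod_cast hN
  set a := fun j => ⌊Int.fract (ξ j) * N⌋₊
  have ha (j : Fin d) : a j < N := by
    refine (Nat.floor_lt (mul_nonneg (Int.fract_nonneg _) hN'.le)).2 ?_
    simpa using mul_lt_mul_of_pos_right (Int.fract_lt_one (ξ j)) hN'
  refine ⟨a, Fintype.mem_piFinset.2 fun j => Finset.mem_range.2 (ha j), ?_⟩
  rintro φ ⟨u, hu, huT, hsmall⟩
  refine ⟨u, hu, huT, ?_⟩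
  -- `ξ` and `fract ξ` give the same `intDist`, and `a / N` is `1 / N`-close to `fract ξ`
  calc intDist (∑ j, u j * (a j / N - φ j))
      ≤ intDist (∑ j, u j * (ξ j - φ j)) +
          |∑ j, u j * (a j / N - φ j) - ∑ j, u j * (ξ j - φ j) - (-∑ j, u j * ⌊ξ j⌋ : ℤ)| :=
        intDist_le_intDist_add_abs_sub_sub_intCast _ _ _
    _ = intDist (∑ j, u j * (ξ j - φ j)) + |∑ j, u j * (a j / N - Int.fract (ξ j))| := by
        rw [Int.cast_neg, Int.cast_sum, sub_neg_eq_add, ← Finset.sum_sub_distrib,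
          ← Finset.sum_add_distrib]
        simp only [Int.fract, Int.cast_mul]
        congr 2
        exact Finset.sum_congr rfl fun j _ => by ring
    _ ≤ intDist (∑ j, u j * (ξ j - φ j)) + ∑ _j : Fin d, T * (1 / N) := by
        gcongr
        refine (Finset.abs_sum_le_sum_abs _ _).trans (Finset.sum_le_sum fun j _ => ?_)
        rw [abs_mul]
        exact mul_le_mul (huT j) (abs_floor_mul_div_sub_le (Int.fract_nonneg _) hN) (abs_nonneg _)
          ((abs_nonneg _).trans (huT j))
    _ < ε + d * T / N := by
        rw [Finset.sum_const, Finset.card_univ, Fintype.card_fin, nsmul_eq_mul, mul_one_div,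
          mul_div_assoc]
        linarith

def badSet (d s : ℕ) (ε T : ℝ) : Set (Fin s → Fin d → ℝ) :=
  {θ | ∃ ξ, ∀ i, θ i ∈ approxSet ξ ε T}

theorem volume_badSet_inter_Icc_le_of_mesh {d s : ℕ} (q : Fin s → Fin d → ℝ) {ε : ℝ} (hε : 0 ≤ ε)
    (T : ℕ) {N : ℕ} (hN : 0 < N) :
    volume (badSet d s ε T ∩ Icc q (q + 1)) ≤
      .ofReal (N ^ d * ((2 * T + 1) ^ d *
        (4 * (ε + d * T / N) * (1 + (ε + d * T / N)))) ^ s) := by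
  set η := ε + d * T / N
  set G := Fintype.piFinset fun _ : Fin d => Finset.range N
  have hcover : badSet d s ε T ∩ Icc q (q + 1) ⊆
      ⋃ a ∈ G, univ.pi fun i => Icc (q i) (q i + 1) ∩ approxSet (fun j => (a j : ℝ) / N) η T := by
    rintro θ ⟨⟨ξ, hξ⟩, hθq⟩
    obtain ⟨a, ha, hsub⟩ := exists_grid_approxSet_subset ξ hN ε (T := T)
    exact mem_biUnion ha fun i _ => ⟨⟨hθq.1 i, hθq.2 i⟩, hsub (hξ i)⟩
  have hη : 0 ≤ η := by positivity
  calc volume (badSet d s ε T ∩ Icc q (q + 1))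
      ≤ ∑ a ∈ G, volume (univ.pi fun i =>
          Icc (q i) (q i + 1) ∩ approxSet (fun j => (a j : ℝ) / N) η T) :=
        (measure_mono hcover).trans (measure_biUnion_finset_le _ _)
    _ ≤ ∑ _a ∈ G, ∏ _i : Fin s, .ofReal ((2 * T + 1) ^ d * (4 * η * (1 + η))) := by
        refine Finset.sum_le_sum fun a _ => ?_
        rw [volume_pi_pi]
        exact Finset.prod_le_prod' fun i _ => volume_Icc_inter_approxSet_le _ (q i) hη T
    _ = .ofReal (N ^ d * ((2 * T + 1) ^ d * (4 * η * (1 + η))) ^ s) := by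
        rw [Finset.sum_const, Finset.prod_const, Finset.card_univ, Fintype.card_fin,
          Fintype.card_piFinset, Finset.prod_const, Finset.card_range, Finset.card_univ,
          Fintype.card_fin, nsmul_eq_mul]
        conv_rhs => rw [ENNReal.ofReal_mul (by positivity), ENNReal.ofReal_pow (by positivity),
          ENNReal.ofReal_pow (by positivity), ENNReal.ofReal_natCast]
        push_cast; rfl

theorem volume_badSet_inter_Icc_le {d s : ℕ} (hds : d ≤ s) (q : Fin s → Fin d → ℝ)
    {ε E : ℝ} (hε : 0 < ε) (hεE : ε ≤ E) {T : ℕ} (hT : 1 ≤ T) :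
    volume (badSet d s ε T ∩ Icc q (q + 1)) ≤
      .ofReal ((d + 1 + E) ^ d * 3 ^ (d * s) * (8 * (1 + 2 * E)) ^ s *
        (T ^ (d * (s + 1)) * ε ^ (s - d))) := by
  have hT' : (1 : ℝ) ≤ T := by exact_mod_cast hT
  have hE : 0 < E := hε.trans_le hεE
  -- the mesh `1 / N` of the grid is chosen so that moving `ξ` to the grid costs at most `ε`
  set N := ⌈(d + 1) * T / ε⌉₊
  have hNε : (d + 1) * T ≤ N * ε := (div_le_iff₀ hε).1 (Nat.le_ceil _)
  have hN : 0 < N := Nat.ceil_pos.2 (by positivity)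
  have hN' : (0 : ℝ) < N := by exact_mod_cast hN
  have hNb : (N : ℝ) ≤ (d + 1 + E) * T / ε :=
    calc (N : ℝ) ≤ (d + 1) * T / ε + 1 := (Nat.ceil_lt_add_one (by positivity)).le
      _ ≤ (d + 1) * T / ε + E * T / ε := by
          gcongr; rw [le_div_iff₀ hε]; nlinarith
      _ = (d + 1 + E) * T / ε := by ring
  have hshift : d * T / N ≤ ε := by rw [div_le_iff₀ hN']; nlinarith
  have hslab : 4 * (ε + d * T / N) * (1 + (ε + d * T / N)) ≤ 8 * (1 + 2 * E) * ε := by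
    nlinarith [div_nonneg (by positivity : (0 : ℝ) ≤ d * T) hN'.le]
  obtain ⟨k, rfl⟩ := Nat.exists_eq_add_of_le hds
  refine (volume_badSet_inter_Icc_le_of_mesh q hε.le T hN).trans (ENNReal.ofReal_le_ofReal ?_)
  calc (N : ℝ) ^ d * ((2 * T + 1) ^ d * (4 * (ε + d * T / N) * (1 + (ε + d * T / N)))) ^ (d + k)
      ≤ ((d + 1 + E) * T / ε) ^ d * ((3 * T) ^ d * (8 * (1 + 2 * E) * ε)) ^ (d + k) := by
        gcongr; linarith
    _ = (d + 1 + E) ^ d * 3 ^ (d * (d + k)) * (8 * (1 + 2 * E)) ^ (d + k) *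
          (T ^ (d * (d + k + 1)) * ε ^ (d + k - d)) := by
        rw [Nat.add_sub_cancel_left]
        simp only [div_pow, mul_pow, ← pow_mul]
        field_simp
        ring

theorem ae_eventually_notMem_of_tsum_inter_ne_top {α ι : Type*}
    [MeasurableSpace α] [Countable ι] {μ : Measure α} {B : ℕ → Set α} {K : ι → Set α}
    (hK : ∀ x, ∃ q, x ∈ K q) (h : ∀ q, ∑' m, μ (B m ∩ K q) ≠ ∞) :
    ∀ᵐ x ∂μ, ∀ᶠ m in Filter.atTop, x ∉ B m := by
  filter_upwards [ae_all_iff.2 fun q => ae_eventually_notMem (h q)] with x hx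
  obtain ⟨q, hq⟩ := hK x
  exact (hx q).mono fun m hm hB => hm ⟨hB, hq⟩

theorem badSet_mono {d s : ℕ} {ε ε' T T' : ℝ} (hε : ε ≤ ε') (hT : T ≤ T') :
    badSet d s ε T ⊆ badSet d s ε' T' := by
  rintro θ ⟨ξ, hξ⟩
  refine ⟨ξ, fun i => ?_⟩
  obtain ⟨u, hu, huT, hsmall⟩ := hξ i
  exact ⟨u, hu, fun j => (huT j).trans hT, hsmall.trans_le hε⟩

theorem uniformlyDiophantine_iff_notMem_badSet {d s : ℕ} {Φ : ℝ → ℝ} {θ : Fin s → Fin d → ℝ} :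
    UniformlyDiophantine d s Φ θ ↔ ∀ T, 1 ≤ T → θ ∉ badSet d s (Φ T) T := by
  simp only [UniformlyDiophantine, badSet, approxSet, mem_ofPred_eq, not_exists, not_forall,
    not_and, not_lt]

theorem exists_uniformlyDiophantine_of_eventually_notMem_badSet {d s : ℕ} {Φ : ℝ → ℝ}
    (hmono : AntitoneOn Φ (Ici 1)) (hpos : ∀ x : ℝ, 1 ≤ x → 0 < Φ x) {θ : Fin s → Fin d → ℝ}
    (h : ∀ᶠ m in Filter.atTop, θ ∉ badSet d s (Φ (2 ^ m)) (2 ^ (m + 1))) :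
    ∃ c > 0, UniformlyDiophantine d s (fun T => c * Φ T) θ := by
  obtain ⟨M, hM⟩ := Filter.eventually_atTop.1 h
  have h1 : (1 : ℝ) ∈ Ici 1 := self_mem_Ici
  have h2 (m : ℕ) : (2 : ℝ) ^ m ∈ Ici 1 := mem_Ici.2 (one_le_pow₀ one_le_two)
  have hΦ1 := hpos 1 le_rfl
  set c := Φ (2 ^ M) / Φ 1
  have hc0 : 0 < c := div_pos (hpos _ (h2 M)) hΦ1
  refine ⟨c, hc0, uniformlyDiophantine_iff_notMem_badSet.2 fun T hT => ?_⟩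
  obtain ⟨n, hnT, hTn⟩ := exists_nat_pow_near hT one_lt_two
  have hc : c ≤ 1 := (div_le_one hΦ1).2 (hmono h1 (h2 M) (h2 M))
  have hΦT : c * Φ T ≤ Φ (2 ^ max M n) := by
    rcases le_total M n with hMn | hnM
    · rw [max_eq_right hMn]
      calc c * Φ T ≤ Φ T := mul_le_of_le_one_left (hpos T hT).le hc
        _ ≤ Φ (2 ^ n) := hmono (h2 n) hT hnT
    · rw [max_eq_left hnM]
      calc c * Φ T ≤ c * Φ 1 := mul_le_mul_of_nonneg_left (hmono h1 hT hT) hc0.le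
        _ = Φ (2 ^ M) := div_mul_cancel₀ _ hΦ1.ne'
  refine fun hbad => hM (max M n) (le_max_left M n) (badSet_mono hΦT ?_ hbad)
  exact hTn.le.trans (pow_le_pow_right₀ one_le_two (by omega))

theorem ae_uniformly_diophantine_general
    {d s : ℕ} (hs : d + 1 ≤ s)
    (Φ : ℝ → ℝ) (hmono : AntitoneOn Φ (Set.Ici 1))
    (hpos : ∀ x : ℝ, 1 ≤ x → 0 < Φ x)
    (hsum : Summable (fun m : ℕ => (2 : ℝ) ^ (m * d * (s + 1)) * Φ ((2 : ℝ) ^ m) ^ (s - d))) :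
    ∀ᵐ θ ∂(volume : Measure (Fin s → Fin d → ℝ)),
      ∃ c > (0 : ℝ), UniformlyDiophantine d s (fun T => c * Φ T) θ := by
  have h2 (m : ℕ) : (2 : ℝ) ^ m ∈ Ici 1 := mem_Ici.2 (one_le_pow₀ one_le_two)
  set C := (d + 1 + Φ 1) ^ d * 3 ^ (d * s) * (8 * (1 + 2 * Φ 1)) ^ s * 2 ^ (d * (s + 1))
  have hvol (p : Fin s → Fin d → ℝ) (m : ℕ) :
      volume (badSet d s (Φ (2 ^ m)) (2 ^ (m + 1) : ℕ) ∩ Icc p (p + 1)) ≤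
        .ofReal (C * ((2 : ℝ) ^ (m * d * (s + 1)) * Φ (2 ^ m) ^ (s - d))) := by
    refine (volume_badSet_inter_Icc_le (by omega) p (hpos _ (h2 m))
      (hmono self_mem_Ici (h2 m) (h2 m)) (Nat.one_le_two_pow)).trans_eq ?_
    congr 1
    push_cast
    ring
  have hcubes (θ : Fin s → Fin d → ℝ) :
      ∃ q : Fin s → Fin d → ℤ, θ ∈ Icc (fun i j => (q i j : ℝ)) ((fun i j => (q i j : ℝ)) + 1) :=
    ⟨fun i j => ⌊θ i j⌋, fun i j => Int.floor_le _, fun i j => (Int.lt_floor_add_one _).le⟩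
  have hbad : ∀ᵐ θ ∂(volume : Measure (Fin s → Fin d → ℝ)),
      ∀ᶠ m in Filter.atTop, θ ∉ badSet d s (Φ (2 ^ m)) (2 ^ (m + 1) : ℕ) :=
    ae_eventually_notMem_of_tsum_inter_ne_top hcubes fun q =>
      ne_top_of_le_ne_top (hsum.mul_left C).tsum_ofReal_ne_top
        (ENNReal.tsum_le_tsum fun m => hvol _ m)
  filter_upwards [hbad] with θ hθ
  exact exists_uniformlyDiophantine_of_eventually_notMem_badSet hmono hpos (by simpa using hθ)

/-- **Metric theory of uniformly Diophantine tuples.** If `s ≥ d + 1` and `Φ` is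
non-increasing with limit `0`, with `liminf_{T→∞} Φ(2T)/Φ(T) > 0` and
`∑ 2^{m d (s+1)} Φ(2^m)^{s-d} < ∞`, then almost every `Θ ∈ (ℝ^d)^s` is uniformly
Diophantine of type `c·Φ` for some `c = c(Θ) > 0`. -/
theorem ae_uniformly_diophantine
    {d s : ℕ} (hd : 1 ≤ d) (hs : d + 1 ≤ s)
    (Φ : ℝ → ℝ) (hmono : AntitoneOn Φ (Set.Ici 1))
    (hpos : ∀ x : ℝ, 1 ≤ x → 0 < Φ x)
    (hlim : Filter.Tendsto Φ Filter.atTop (nhds 0))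
    (hliminf : 0 < Filter.liminf (fun T : ℝ => Φ (2 * T) / Φ T) Filter.atTop)
    (hsum : Summable (fun m : ℕ => (2 : ℝ) ^ (m * d * (s + 1)) * Φ ((2 : ℝ) ^ m) ^ (s - d))) :
    ∀ᵐ θ ∂(volume : Measure (Fin s → Fin d → ℝ)),
      ∃ c > (0 : ℝ), UniformlyDiophantine d s (fun T => c * Φ T) θ :=
  ae_uniformly_diophantine_general hs Φ hmono hpos hsum

end
end

section
/- Let d ≥ 1, 0 < ε < 1/2 and M ≥ 2^d ε^{−d}. Then C_d(ε, M) ⊆ ⋃_{p/q ∈ S} B(p/q, 1/(q M^{1/d})), where S is the set of rational points p/q ∈ 𝕋^d (p ∈ ℤ^d, q ∈ ℤ) with 1 ≤ q ≤ M and p/q ∈ C_d(ε/2, q), and B(x, r) denotes the open ball of radius r in 𝕋^d for the metric induced by the sup-norm. -/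
open Module Set

noncomputable section

/-- The sup-norm distance from `x ∈ ℝ^d` to the integer lattice `ℤ^d`
(the Pi norm on `Fin d → ℝ` is the sup-norm); this induces the metric on the
torus `𝕋^d`. -/
def supIntDist (d : ℕ) (x : Fin d → ℝ) : ℝ :=
  ‖(fun j => x j - (round (x j) : ℝ) : Fin d → ℝ)‖

/-- The finite sequence of multiples `(m ξ)_{0 ≤ m ≤ M}` is `ε`-dense in the torus
`𝕋^d` (for the metric induced by the sup-norm): every point of `𝕋^d` is within
distance `ε` of some multiple. -/
def MultiplesEpsDense (d : ℕ) (ε M : ℝ) (ξ : Fin d → ℝ) : Prop :=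
  ∀ y : Fin d → ℝ, ∃ m : ℕ, (m : ℝ) ≤ M ∧
    supIntDist d (fun j => (m : ℝ) * ξ j - y j) ≤ ε

section Aux

open MeasureTheory Submodule ENNReal

variable {d : ℕ} (ξ : Fin d → ℝ)

/-- The shear linear map `(q, p) ↦ (q, q ξ - p)` on `ℝ^{d+1}`. -/
def shear : (Fin (d+1) → ℝ) →ₗ[ℝ] (Fin (d+1) → ℝ) where
  toFun v := fun i => Fin.cases (v 0) (fun j => v 0 * ξ j - v j.succ) i
  map_add' v w := by
    funext i
    cases i using Fin.cases with
    | zero => simp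
    | succ j => simp; ring
  map_smul' c v := by
    funext i
    cases i using Fin.cases with
    | zero => simp
    | succ j => simp; ring

lemma shear_inv : Function.Involutive (shear ξ) := by
  intro v; funext i
  cases i using Fin.cases with
  | zero => simp [shear]
  | succ j => simp [shear]

def shearE : (Fin (d+1) → ℝ) ≃ₗ[ℝ] (Fin (d+1) → ℝ) :=
  LinearEquiv.ofInvolutive (shear ξ) (shear_inv ξ)

def shearB : Basis (Fin (d+1)) ℝ (Fin (d+1) → ℝ) :=
  (Pi.basisFun ℝ (Fin (d+1))).map (shearE ξ)

lemma shearB_apply (i : Fin (d+1)) : shearB ξ i = shear ξ (Pi.single i 1) := by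
  simp [shearB, shearE, Pi.basisFun_apply]

lemma shearB_zero_zero : shearB ξ 0 0 = 1 := by
  rw [shearB_apply]; simp [shear]

lemma shearB_succ_succ (k j : Fin d) :
    shearB ξ k.succ j.succ = -(if k = j then (1:ℝ) else 0) := by
  have h0 : (0:Fin (d+1)) ≠ k.succ := (Fin.succ_ne_zero k).symm
  rw [shearB_apply]; simp [shear, Pi.single_apply, h0, eq_comm]

lemma shearB_succ_zero (k : Fin d) : shearB ξ k.succ 0 = 0 := by
  rw [shearB_apply]; simp [shear, Pi.single_apply, Fin.succ_ne_zero]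

lemma volume_shearB : volume (ZSpan.fundamentalDomain (shearB ξ)) = 1 := by
  rw [ZSpan.volume_fundamentalDomain]
  have ht : (Matrix.of ⇑(shearB ξ)).BlockTriangular id := by
    intro i j hij
    simp only [id_eq] at hij
    cases i using Fin.cases with
    | zero => exact absurd hij (by simp [Fin.not_lt_zero, Fin.le_zero_iff] at *)
    | succ k =>
      cases j using Fin.cases with
      | zero => simpa [Matrix.of_apply] using shearB_succ_zero ξ k
      | succ l =>
        have : k ≠ l := by
          intro h; subst h; exact absurd hij (lt_irrefl _)
        simpa [Matrix.of_apply, this] using shearB_succ_succ ξ k l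
  rw [Matrix.det_of_upperTriangular ht]
  have : ∀ i : Fin (d+1), (Matrix.of ⇑(shearB ξ)) i i = Fin.cases (1:ℝ) (fun _ => -1) i := by
    intro i
    cases i using Fin.cases with
    | zero => simpa using shearB_zero_zero ξ
    | succ k => simpa using shearB_succ_succ ξ k k
  rw [Finset.prod_congr rfl fun i _ => this i]
  rw [Fin.prod_univ_succ]
  simp [abs_pow]

lemma mem_span_shearB (v : Fin (d+1) → ℝ)
    (hv : v ∈ span ℤ (Set.range (shearB ξ))) :
    ∃ n : Fin (d+1) → ℤ, v 0 = n 0 ∧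
      ∀ j : Fin d, v j.succ = (n 0 : ℝ) * ξ j - n j.succ := by
  rw [mem_span_range_iff_exists_fun] at hv
  obtain ⟨n, hn⟩ := hv
  have hw : v = shear ξ (fun i => (n i : ℝ)) := by
    rw [← hn]
    have h1 : ∀ i : Fin (d+1), n i • shearB ξ i = shear ξ (n i • Pi.single i (1:ℝ)) := by
      intro i
      rw [shearB_apply, map_zsmul]
    rw [Finset.sum_congr rfl fun i _ => h1 i, ← map_sum]
    congr 1
    funext k
    simp [Finset.sum_apply, Pi.single_apply]
  refine ⟨n, ?_, ?_⟩
  · rw [hw]; simp [shear]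
  · intro j; rw [hw]; simp [shear]

lemma exists_box_lattice (B : Basis (Fin (d+1)) ℝ (Fin (d+1) → ℝ)) (a r : ℝ)
    (hs : (volume (ZSpan.fundamentalDomain B)) * 2 ^ (finrank ℝ (Fin (d+1) → ℝ)) <
      volume (Set.univ.pi fun i : Fin (d+1) =>
        Set.Icc (-(Fin.cases a (fun _ => r) i : ℝ)) (Fin.cases a (fun _ => r) i))) :
    ∃ v ∈ span ℤ (Set.range B), v ≠ 0 ∧
      |v 0| ≤ a ∧ ∀ j : Fin d, |v j.succ| ≤ r := by
  classical
  set c : Fin (d+1) → ℝ := fun i => Fin.cases a (fun _ => r) i with hc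
  set s : Set (Fin (d+1) → ℝ) := Set.univ.pi fun i => Set.Icc (-(c i)) (c i) with hsdef
  have h_symm : ∀ x ∈ s, -x ∈ s := by
    intro x hx i _
    have := hx i (Set.mem_univ i)
    simp only [Set.mem_Icc] at *
    constructor <;> simp <;> linarith [this.1, this.2]
  have h_conv : Convex ℝ s := convex_pi fun i _ => convex_Icc _ _
  have : Countable (span ℤ (Set.range ⇑B)).toAddSubgroup :=
    inferInstanceAs (Countable (span ℤ (Set.range ⇑B)))
  obtain ⟨v, hv0, hvs⟩ := exists_ne_zero_mem_lattice_of_measure_mul_two_pow_lt_measure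
    (ZSpan.isAddFundamentalDomain' B volume) h_symm h_conv hs
  refine ⟨(v : Fin (d+1) → ℝ), SetLike.coe_mem _, by simpa using hv0, ?_, ?_⟩
  · have := hvs 0 (Set.mem_univ _)
    rw [abs_le]; simpa [c] using this
  · intro j
    have := hvs j.succ (Set.mem_univ _)
    rw [abs_le]; simpa [c] using this

lemma vol_ineq {d : ℕ} (a r : ℝ) (ha : 0 ≤ a) (hr : 0 ≤ r) (h : 1 < a * r ^ d) :
    (1 : ℝ≥0∞) * 2 ^ (finrank ℝ (Fin (d+1) → ℝ)) <
      volume (Set.univ.pi fun i : Fin (d+1) =>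
        Set.Icc (-(Fin.cases a (fun _ => r) i : ℝ)) (Fin.cases a (fun _ => r) i)) := by
  rw [volume_pi, Measure.pi_pi]
  have hsub : ∀ t : ℝ, t - -t = 2 * t := by intro t; ring
  simp only [Real.volume_Icc, hsub]
  rw [Fin.prod_univ_succ]
  simp only [Fin.cases_zero, Fin.cases_succ]
  rw [Finset.prod_const, Finset.card_univ, Fintype.card_fin,
    ← ENNReal.ofReal_pow (by linarith), ← ENNReal.ofReal_mul (by linarith)]
  have hfr : finrank ℝ (Fin (d+1) → ℝ) = d + 1 := by
    simp [Module.finrank_pi]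
  rw [hfr, one_mul]
  have h2 : ((2:ℝ≥0∞) ^ (d+1)) = ENNReal.ofReal ((2:ℝ)^(d+1)) := by
    rw [ENNReal.ofReal_pow (by norm_num)]
    norm_num
  have ha0 : 0 < a := by nlinarith [pow_nonneg hr d]
  have hrd0 : 0 < r ^ d := by nlinarith
  have h2r : 0 < 2 * a * (2*r)^d := by
    rw [mul_pow]
    have : (0:ℝ) < (2:ℝ)^d := by positivity
    nlinarith
  rw [h2, ENNReal.ofReal_lt_ofReal_iff h2r]
  have key : (2:ℝ)^(d+1) * 1 < 2^(d+1) * (a * r^d) := by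
    have : (0:ℝ) < (2:ℝ)^(d+1) := by positivity
    nlinarith
  calc (2:ℝ)^(d+1) = 2^(d+1) * 1 := by ring
    _ < 2^(d+1) * (a * r^d) := key
    _ = 2 * a * (2*r)^d := by rw [mul_pow]; ring

/-- Dirichlet-type simultaneous approximation with strict inequality. -/
lemma exists_dirichlet {d : ℕ} (hd : 1 ≤ d) (ξ : Fin d → ℝ) {M : ℝ} (hM4 : 4 ≤ M) :
    ∃ q : ℕ, 1 ≤ q ∧ (q : ℝ) ≤ M ∧ ∃ p : Fin d → ℤ,
      ∀ j, |(q : ℝ) * ξ j - (p j : ℝ)| < (M ^ ((1 : ℝ) / (d:ℝ)))⁻¹ := by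
  have hd0 : (0:ℝ) < d := by exact_mod_cast hd
  have hM0 : (0:ℝ) < M := by linarith
  have hfl : (⌊M⌋:ℝ) ≤ M := Int.floor_le M
  have hfl2 : M < (⌊M⌋:ℝ) + 1 := Int.lt_floor_add_one M
  set δ : ℝ := ((⌊M⌋:ℝ) + 1 - M) / 3 with hδdef
  have hδ : 0 < δ := by rw [hδdef]; linarith
  set a : ℝ := (⌊M⌋:ℝ) + 1 - δ with hadef
  set x : ℝ := (⌊M⌋:ℝ) + 1 - 2*δ with hxdef
  have hMx : M < x := by rw [hxdef, hδdef]; linarith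
  have hxa : x < a := by rw [hxdef, hadef]; linarith
  have hx1 : 1 < x := by linarith
  have hx0 : 0 < x := by linarith
  set r : ℝ := x ^ (-(1:ℝ)/(d:ℝ)) with hrdef
  have hr0 : 0 < r := Real.rpow_pos_of_pos hx0 _
  have hrd : r ^ d = x⁻¹ := by
    rw [hrdef, ← Real.rpow_natCast (x ^ (-(1:ℝ)/(d:ℝ))) d, ← Real.rpow_mul hx0.le]
    have : (-(1:ℝ)/(d:ℝ)) * (d:ℕ) = -1 := by field_simp
    rw [this, Real.rpow_neg_one]
  have har : 1 < a * r ^ d := by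
    rw [hrd, ← div_eq_mul_inv]
    exact (one_lt_div hx0).mpr hxa
  have hr1 : r < 1 := by
    rw [hrdef]
    apply Real.rpow_lt_one_of_one_lt_of_neg hx1
    rw [neg_div]
    simp [one_div, inv_pos]
    positivity
  have hrM : r < (M ^ ((1 : ℝ) / (d:ℝ)))⁻¹ := by
    rw [hrdef, neg_div, Real.rpow_neg hx0.le]
    have h1 : M ^ ((1:ℝ)/(d:ℝ)) < x ^ ((1:ℝ)/(d:ℝ)) :=
      Real.rpow_lt_rpow hM0.le hMx (by positivity)
    exact inv_strictAnti₀ (Real.rpow_pos_of_pos hM0 _) h1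
  obtain ⟨v, hvmem, hvne, hva, hvr⟩ := exists_box_lattice (shearB ξ) a r
    (by rw [volume_shearB]; exact vol_ineq a r (by linarith) hr0.le har)
  obtain ⟨n, hn0, hnsucc⟩ := mem_span_shearB ξ v hvmem
  have hq0abs : |(n 0 : ℝ)| ≤ a := by rw [← hn0]; exact hva
  have hq0M : ((|n 0| : ℤ) : ℝ) ≤ M := by
    have h1 : ((|n 0| : ℤ) : ℝ) < (⌊M⌋:ℝ) + 1 := by
      rw [Int.cast_abs]; exact lt_of_le_of_lt hq0abs (by rw [hadef]; linarith)
    have h2 : (|n 0| : ℤ) < ⌊M⌋ + 1 := by exact_mod_cast h1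
    have h3 : (|n 0| : ℤ) ≤ ⌊M⌋ := by omega
    calc ((|n 0| : ℤ) : ℝ) ≤ (⌊M⌋:ℝ) := by exact_mod_cast h3
      _ ≤ M := hfl
  have hq0ne : n 0 ≠ 0 := by
    intro h0
    apply hvne
    have hp0 : ∀ j : Fin d, n j.succ = 0 := by
      intro j
      have h1 : |v j.succ| ≤ r := hvr j
      have h2 : v j.succ = -(n j.succ : ℝ) := by rw [hnsucc j, h0]; simp
      have h3 : |(n j.succ : ℝ)| < 1 := by
        rw [← abs_neg, ← h2]; exact lt_of_le_of_lt h1 hr1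
      have : |n j.succ| < 1 := by exact_mod_cast h3
      exact Int.abs_lt_one_iff.mp this
    funext i
    cases i using Fin.cases with
    | zero => rw [hn0, h0]; simp
    | succ j => rw [hnsucc j, h0, hp0 j]; simp
  have hbound : ∀ j, |(n 0 : ℝ) * ξ j - (n j.succ : ℝ)| ≤ r := by
    intro j; rw [← hnsucc j]; exact hvr j
  rcases lt_trichotomy (n 0) 0 with hneg | hzero | hpos
  · refine ⟨(-(n 0)).toNat, ?_, ?_, fun j => -(n j.succ), fun j => ?_⟩
    · omega
    · have : ((-(n 0)).toNat : ℝ) = ((|n 0| : ℤ) : ℝ) := by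
        rw [abs_of_neg hneg]; norm_cast; omega
      rw [this]; exact hq0M
    · have hcast : (((-(n 0)).toNat : ℕ) : ℝ) = -(n 0 : ℝ) := by
        norm_cast; omega
      rw [hcast]
      push_cast
      have : -(n 0 : ℝ) * ξ j - -(n j.succ : ℝ) = -((n 0 : ℝ) * ξ j - (n j.succ : ℝ)) := by ring
      rw [this, abs_neg]
      exact lt_of_le_of_lt (hbound j) hrM
  · exact absurd hzero hq0ne
  · refine ⟨(n 0).toNat, ?_, ?_, fun j => n j.succ, fun j => ?_⟩
    · omega
    · have : ((n 0).toNat : ℝ) = ((|n 0| : ℤ) : ℝ) := by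
        rw [abs_of_pos hpos]; norm_cast; omega
      rw [this]; exact hq0M
    · have hcast : (((n 0).toNat : ℕ) : ℝ) = (n 0 : ℝ) := by norm_cast; omega
      rw [hcast]
      exact lt_of_le_of_lt (hbound j) hrM

lemma supIntDist_le' {d : ℕ} {C : ℝ} (hC : 0 ≤ C) (x : Fin d → ℝ) (k : Fin d → ℤ)
    (h : ∀ j, |x j - (k j : ℝ)| ≤ C) : supIntDist d x ≤ C := by
  rw [supIntDist]
  refine (pi_norm_le_iff_of_nonneg hC).mpr fun j => ?_
  rw [Real.norm_eq_abs]
  exact le_trans (round_le (x j) (k j)) (h j)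

lemma supIntDist_lt' {d : ℕ} {C : ℝ} (hC : 0 < C) (x : Fin d → ℝ) (k : Fin d → ℤ)
    (h : ∀ j, |x j - (k j : ℝ)| < C) : supIntDist d x < C := by
  rw [supIntDist]
  refine (pi_norm_lt_iff hC).mpr fun j => ?_
  rw [Real.norm_eq_abs]
  exact lt_of_le_of_lt (round_le (x j) (k j)) (h j)

lemma abs_le_supIntDist {d : ℕ} (x : Fin d → ℝ) (j : Fin d) :
    |x j - (round (x j) : ℝ)| ≤ supIntDist d x := by
  rw [supIntDist]
  simpa [Real.norm_eq_abs] using norm_le_pi_norm (fun j => x j - (round (x j):ℝ)) j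

end Aux

/-- **Reduction to rational points.** If `0 < ε < 1/2`, `M ≥ 2^d ε^{-d}` and the
multiples `(m ξ)_{0 ≤ m ≤ M}` are not `ε`-dense in `𝕋^d`, then `ξ` lies in the open
ball of radius `1/(q M^{1/d})` (in the torus metric) around some rational point
`p/q` with `1 ≤ q ≤ M` whose multiples `(m (p/q))_{0 ≤ m ≤ q}` are not
`(ε/2)`-dense in `𝕋^d`. -/
theorem not_dense_implies_near_bad_rational
    {d : ℕ} (hd : 1 ≤ d) (ε M : ℝ) (hε : 0 < ε) (hε' : ε < 1 / 2)
    (hM : (2 : ℝ) ^ d * ε⁻¹ ^ d ≤ M)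
    (ξ : Fin d → ℝ) (hndense : ¬ MultiplesEpsDense d ε M ξ) :
    ∃ q : ℕ, 1 ≤ q ∧ (q : ℝ) ≤ M ∧ ∃ p : Fin d → ℤ,
      ¬ MultiplesEpsDense d (ε / 2) (q : ℝ) (fun j => (p j : ℝ) / (q : ℝ)) ∧
      supIntDist d (fun j => ξ j - (p j : ℝ) / (q : ℝ)) <
        1 / ((q : ℝ) * M ^ ((1 : ℝ) / (d : ℝ))) := by
  have hd0 : (0:ℝ) < d := by exact_mod_cast hd
  have hεinv0 : (0:ℝ) < ε⁻¹ := inv_pos.mpr hε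
  have h2ε : (2:ℝ) ≤ ε⁻¹ := by
    nlinarith [mul_inv_cancel₀ hε.ne']
  have hεd : (2:ℝ)^d ≤ ε⁻¹^d := pow_le_pow_left₀ (by norm_num) h2ε d
  have hM4 : (4:ℝ) ≤ M := by
    have h1 : (4:ℝ) ≤ 4^d := by
      calc (4:ℝ) = 4^1 := (pow_one 4).symm
        _ ≤ 4^d := pow_le_pow_right₀ (by norm_num) hd
    have h2 : (4:ℝ)^d = 2^d * 2^d := by rw [← mul_pow]; norm_num
    have h3 : (2:ℝ)^d * 2^d ≤ 2^d * ε⁻¹^d :=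
      mul_le_mul_of_nonneg_left hεd (by positivity)
    linarith
  have hM0 : (0:ℝ) < M := by linarith
  have hMpow0 : (0:ℝ) < M ^ ((1:ℝ)/(d:ℝ)) := Real.rpow_pos_of_pos hM0 _
  have hMpow2 : (2:ℝ) * ε⁻¹ ≤ M ^ ((1:ℝ)/(d:ℝ)) := by
    have hMge : ((2:ℝ) * ε⁻¹)^d ≤ M := by rw [mul_pow]; exact hM
    have hb0 : (0:ℝ) < 2 * ε⁻¹ := by positivity
    have h1 : (((2:ℝ)*ε⁻¹)^(d:ℕ) : ℝ) ^ ((1:ℝ)/(d:ℝ)) ≤ M ^ ((1:ℝ)/(d:ℝ)) :=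
      Real.rpow_le_rpow (by positivity) hMge (by positivity)
    calc (2:ℝ) * ε⁻¹ = (((2:ℝ)*ε⁻¹)^(d:ℕ) : ℝ) ^ ((1:ℝ)/(d:ℝ)) := by
          rw [← Real.rpow_natCast (2*ε⁻¹) d, ← Real.rpow_mul hb0.le]
          rw [show ((d:ℝ) * ((1:ℝ)/(d:ℝ))) = 1 by field_simp]
          rw [Real.rpow_one]
      _ ≤ M ^ ((1:ℝ)/(d:ℝ)) := h1
  have hMinv : (M ^ ((1:ℝ)/(d:ℝ)))⁻¹ ≤ ε / 2 := by
    have hb0 : (0:ℝ) < 2 * ε⁻¹ := by positivity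
    have h1 : (M ^ ((1:ℝ)/(d:ℝ)))⁻¹ ≤ ((2:ℝ) * ε⁻¹)⁻¹ := by
      gcongr
    have h2 : ((2:ℝ) * ε⁻¹)⁻¹ = ε / 2 := by field_simp
    linarith
  obtain ⟨q, hq1, hqM, p, hp⟩ := exists_dirichlet hd ξ hM4
  have hq0 : (0:ℝ) < q := by exact_mod_cast hq1
  refine ⟨q, hq1, hqM, p, ?_, ?_⟩
  · -- p/q multiples are not ε/2-dense up to q
    intro hdense
    apply hndense
    intro y
    obtain ⟨m, hmq, hmd⟩ := hdense y
    have hm0 : (0:ℝ) ≤ m := Nat.cast_nonneg m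
    refine ⟨m, le_trans hmq hqM, ?_⟩
    refine supIntDist_le' (by linarith) _
      (fun j => round ((m:ℝ) * ((p j : ℝ)/(q:ℝ)) - y j)) fun j => ?_
    set aj : ℝ := (m:ℝ) * ((p j : ℝ)/(q:ℝ)) - y j with haj
    have h1 : |aj - (round aj : ℝ)| ≤ ε / 2 := by
      refine le_trans ?_ hmd
      exact abs_le_supIntDist (fun j => (m:ℝ) * ((p j : ℝ)/(q:ℝ)) - y j) j
    have h2 : |((m:ℝ) * ξ j - y j) - aj| ≤ ε / 2 := by
      have he : ((m:ℝ) * ξ j - y j) - aj = ((m:ℝ)/(q:ℝ)) * ((q:ℝ) * ξ j - (p j : ℝ)) := by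
        rw [haj]; field_simp; ring
      rw [he, abs_mul, abs_of_nonneg (by positivity)]
      have hmq1 : (m:ℝ)/(q:ℝ) ≤ 1 := by
        rw [div_le_one hq0]; exact hmq
      calc (m:ℝ)/(q:ℝ) * |(q:ℝ) * ξ j - (p j : ℝ)|
          ≤ 1 * |(q:ℝ) * ξ j - (p j : ℝ)| :=
            mul_le_mul_of_nonneg_right hmq1 (abs_nonneg _)
        _ = |(q:ℝ) * ξ j - (p j : ℝ)| := one_mul _
        _ ≤ (M ^ ((1:ℝ)/(d:ℝ)))⁻¹ := (hp j).le
        _ ≤ ε / 2 := hMinv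
    calc |((m:ℝ) * ξ j - y j) - (round aj : ℝ)|
        = |(aj - (round aj : ℝ)) + (((m:ℝ) * ξ j - y j) - aj)| := by ring_nf
      _ ≤ |aj - (round aj : ℝ)| + |((m:ℝ) * ξ j - y j) - aj| := abs_add_le _ _
      _ ≤ ε / 2 + ε / 2 := add_le_add h1 h2
      _ = ε := by ring
  · -- ball bound
    refine supIntDist_lt' (by positivity) _ (fun _ => 0) fun j => ?_
    have he : ξ j - (p j : ℝ)/(q:ℝ) - ((0:ℤ):ℝ) = ((q:ℝ) * ξ j - (p j : ℝ)) / (q:ℝ) := by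
      field_simp
      ring
    rw [he, abs_div, abs_of_pos hq0]
    rw [div_lt_iff₀ hq0]
    have : 1 / ((q:ℝ) * M ^ ((1:ℝ)/(d:ℝ))) * (q:ℝ) = (M ^ ((1:ℝ)/(d:ℝ)))⁻¹ := by
      field_simp
    rw [this]
    exact hp j

end
end

section
/- Let α, β, γ, δ be nonzero real numbers satisfying γ/(δ(α + γ)) ∈ ℚ and (α + γ)(β + δ) = 1. Let Λ₁ = ℤ², Λ₂ = [[γ, α],[0, 1]]·ℤ² and Λ₃ = [[1, 0],[β, δ]]·ℤ². Then there exist x₂, x₃ ∈ ℝ² such that Λ₁ ∪ (x₂ + Λ₂) ∪ (x₃ + Λ₃) is uniformly discrete. -/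
open Set

noncomputable section

/-- A set in a pseudometric space is uniformly discrete if there is a uniform
positive lower bound on the distance between distinct points. -/
def UniformlyDiscrete {E : Type*} [PseudoMetricSpace E] (Y : Set E) : Prop :=
  ∃ δ₀ > (0 : ℝ), ∀ x ∈ Y, ∀ y ∈ Y, x ≠ y → δ₀ ≤ dist x y

/-- **A uniformly discrete union of three translated lattices.** Let `α, β, γ, δ` be
nonzero reals with `γ/(δ(α+γ)) ∈ ℚ` and `(α+γ)(β+δ) = 1`, and let `Λ₁ = ℤ²`,
`Λ₂ = [[γ, α],[0, 1]]·ℤ²`, `Λ₃ = [[1, 0],[β, δ]]·ℤ²`. Then there are `x₂, x₃ ∈ ℝ²`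
such that `Λ₁ ∪ (x₂ + Λ₂) ∪ (x₃ + Λ₃)` is uniformly discrete. -/
theorem three_lattices_uniformly_discrete
    (α β γ δ : ℝ) (hα : α ≠ 0) (hβ : β ≠ 0) (hγ : γ ≠ 0) (hδ : δ ≠ 0)
    (h1 : ∃ r : ℚ, γ / (δ * (α + γ)) = (r : ℝ))
    (h2 : (α + γ) * (β + δ) = 1) :
    ∃ x₂ x₃ : ℝ × ℝ,
      UniformlyDiscrete
        (({v : ℝ × ℝ | ∃ m n : ℤ, v = ((m : ℝ), (n : ℝ))} ∪
          (fun v => x₂ + v) '' {v : ℝ × ℝ | ∃ m n : ℤ, v = (γ * (m : ℝ) + α * (n : ℝ), (n : ℝ))}) ∪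
          (fun v => x₃ + v) '' {v : ℝ × ℝ | ∃ m n : ℤ, v = ((m : ℝ), β * (m : ℝ) + δ * (n : ℝ))}) := by
  obtain ⟨r, hr⟩ := h1
  set t := α + γ with ht_def
  have ht : t ≠ 0 := by
    intro h
    rw [h, zero_mul] at h2
    exact zero_ne_one h2
  have hδt : δ * t ≠ 0 := mul_ne_zero hδ ht
  rw [div_eq_iff hδt] at hr
  -- hr : γ = r * (δ * t)
  set c : ℝ := δ * t / (r.den : ℝ) with hc_def
  have hden : (0:ℝ) < (r.den : ℝ) := by exact_mod_cast r.pos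
  have hc : c ≠ 0 := div_ne_zero hδt (ne_of_gt hden)
  have hγnum : γ = (r.num : ℝ) * c := by
    rw [hr, hc_def, Rat.cast_def]
    field_simp
  have hδtden : δ * t = (r.den : ℝ) * c := by
    rw [hc_def]; field_simp
  have h2' : t * β + t * δ = 1 := by rw [← mul_add]; exact h2
  -- integer distance lemmas
  have hint1 : ∀ k l : ℤ, k ≠ l → (1:ℝ) ≤ |(k:ℝ) - (l:ℝ)| := by
    intro k l h
    have h1 : (1:ℤ) ≤ |k - l| := Int.one_le_abs (sub_ne_zero.mpr h)
    exact_mod_cast h1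
  have hint : ∀ k l : ℤ, k ≠ l → (1:ℝ)/2 ≤ |(k:ℝ) - (l:ℝ)| := by
    intro k l h
    linarith [hint1 k l h]
  have hhalf : ∀ k : ℤ, (1:ℝ)/2 ≤ |(k:ℝ) + 1/2| := by
    intro k
    rcases le_or_gt 0 k with h | h
    · have : (0:ℝ) ≤ (k:ℝ) := by exact_mod_cast h
      rw [abs_of_nonneg (by linarith)]; linarith
    · have : (k:ℝ) ≤ -1 := by exact_mod_cast Int.le_sub_one_of_lt h
      rw [abs_of_nonpos (by linarith)]; linarith
  -- reduce dist to coordinates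
  have hd1 : ∀ (u v : ℝ × ℝ) (d : ℝ), d ≤ |u.1 - v.1| → d ≤ dist u v := by
    intro u v d h
    rw [Prod.dist_eq]
    exact le_trans h (le_trans (le_of_eq (Real.dist_eq u.1 v.1).symm) (le_max_left _ _))
  have hd2 : ∀ (u v : ℝ × ℝ) (d : ℝ), d ≤ |u.2 - v.2| → d ≤ dist u v := by
    intro u v d h
    rw [Prod.dist_eq]
    exact le_trans h (le_trans (le_of_eq (Real.dist_eq u.2 v.2).symm) (le_max_right _ _))
  set X₂ : ℝ × ℝ := (1/2 + t/2 + c/2, 1/2) with hX₂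
  set X₃ : ℝ × ℝ := (1/2, 0) with hX₃
  set δ₀ : ℝ := min (min (1/2) (min |γ| |δ|)) (|c| / (2*(1+|t|))) with hδ₀
  have hδ₀pos : 0 < δ₀ := by
    apply lt_min
    · apply lt_min (by norm_num)
      exact lt_min (abs_pos.mpr hγ) (abs_pos.mpr hδ)
    · apply div_pos (abs_pos.mpr hc)
      positivity
  have hδ₀h : δ₀ ≤ 1/2 := le_trans (min_le_left _ _) (min_le_left _ _)
  have hδ₀γ : δ₀ ≤ |γ| :=
    le_trans (min_le_left _ _) (le_trans (min_le_right _ _) (min_le_left _ _))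
  have hδ₀δ : δ₀ ≤ |δ| :=
    le_trans (min_le_left _ _) (le_trans (min_le_right _ _) (min_le_right _ _))
  have hδ₀c : δ₀ ≤ |c| / (2*(1+|t|)) := min_le_right _ _
  refine ⟨X₂, X₃, δ₀, hδ₀pos, ?_⟩
  -- the six pairwise bounds
  have h11 : ∀ m n m' n' : ℤ, (((m:ℝ), (n:ℝ)) : ℝ × ℝ) ≠ ((m':ℝ), (n':ℝ)) →
      δ₀ ≤ dist (((m:ℝ), (n:ℝ)) : ℝ × ℝ) (((m':ℝ), (n':ℝ)) : ℝ × ℝ) := by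
    intro m n m' n' hne
    by_cases hm : m = m'
    · have hn : n ≠ n' := by
        intro hn; exact hne (by rw [hm, hn])
      exact hd2 _ _ _ (le_trans hδ₀h (hint n n' hn))
    · exact hd1 _ _ _ (le_trans hδ₀h (hint m m' hm))
  have h12 : ∀ m n m' n' : ℤ,
      δ₀ ≤ dist (((m:ℝ), (n:ℝ)) : ℝ × ℝ) (X₂ + (γ * (m':ℝ) + α * (n':ℝ), (n':ℝ))) := by
    intro m n m' n'
    apply hd2 _ _ _
    have : ((m:ℝ), (n:ℝ)).2 - (X₂ + (γ * (m':ℝ) + α * (n':ℝ), (n':ℝ))).2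
        = ((n - n' - 1 : ℤ) : ℝ) + 1/2 := by
      simp [hX₂, Prod.snd_add]
      push_cast
      ring
    rw [this]
    exact le_trans hδ₀h (hhalf _)
  have h13 : ∀ m n m' n' : ℤ,
      δ₀ ≤ dist (((m:ℝ), (n:ℝ)) : ℝ × ℝ) (X₃ + ((m':ℝ), β * (m':ℝ) + δ * (n':ℝ))) := by
    intro m n m' n'
    apply hd1 _ _ _
    have : ((m:ℝ), (n:ℝ)).1 - (X₃ + ((m':ℝ), β * (m':ℝ) + δ * (n':ℝ))).1
        = ((m - m' - 1 : ℤ) : ℝ) + 1/2 := by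
      simp [hX₃, Prod.fst_add]
      push_cast
      ring
    rw [this]
    exact le_trans hδ₀h (hhalf _)
  have h22 : ∀ m n m' n' : ℤ,
      (X₂ + (γ * (m:ℝ) + α * (n:ℝ), (n:ℝ)) : ℝ × ℝ) ≠ X₂ + (γ * (m':ℝ) + α * (n':ℝ), (n':ℝ)) →
      δ₀ ≤ dist (X₂ + (γ * (m:ℝ) + α * (n:ℝ), (n:ℝ)) : ℝ × ℝ)
        (X₂ + (γ * (m':ℝ) + α * (n':ℝ), (n':ℝ))) := by
    intro m n m' n' hne
    by_cases hn : n = n'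
    · have hm : m ≠ m' := by
        intro hm; exact hne (by rw [hm, hn])
      apply hd1 _ _ _
      have : (X₂ + (γ * (m:ℝ) + α * (n:ℝ), (n:ℝ))).1
          - (X₂ + (γ * (m':ℝ) + α * (n':ℝ), (n':ℝ))).1 = γ * ((m:ℝ) - (m':ℝ)) := by
        simp [Prod.fst_add, hn]; ring
      rw [this, abs_mul]
      calc δ₀ ≤ |γ| := hδ₀γ
        _ = |γ| * 1 := (mul_one _).symm
        _ ≤ |γ| * |(m:ℝ) - (m':ℝ)| := by
            apply mul_le_mul_of_nonneg_left _ (abs_nonneg _)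
            linarith [hint1 m m' hm]
    · apply hd2 _ _ _
      have : (X₂ + (γ * (m:ℝ) + α * (n:ℝ), (n:ℝ))).2
          - (X₂ + (γ * (m':ℝ) + α * (n':ℝ), (n':ℝ))).2 = (n:ℝ) - (n':ℝ) := by
        simp [Prod.snd_add]
      rw [this]
      exact le_trans hδ₀h (hint n n' hn)
  have h33 : ∀ m n m' n' : ℤ,
      (X₃ + ((m:ℝ), β * (m:ℝ) + δ * (n:ℝ)) : ℝ × ℝ) ≠ X₃ + ((m':ℝ), β * (m':ℝ) + δ * (n':ℝ)) →
      δ₀ ≤ dist (X₃ + ((m:ℝ), β * (m:ℝ) + δ * (n:ℝ)) : ℝ × ℝ)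
        (X₃ + ((m':ℝ), β * (m':ℝ) + δ * (n':ℝ))) := by
    intro m n m' n' hne
    by_cases hm : m = m'
    · have hn : n ≠ n' := by
        intro hn; exact hne (by rw [hm, hn])
      apply hd2 _ _ _
      have : (X₃ + ((m:ℝ), β * (m:ℝ) + δ * (n:ℝ))).2
          - (X₃ + ((m':ℝ), β * (m':ℝ) + δ * (n':ℝ))).2 = δ * ((n:ℝ) - (n':ℝ)) := by
        simp [Prod.snd_add, hm]; ring
      rw [this, abs_mul]
      calc δ₀ ≤ |δ| := hδ₀δ
        _ = |δ| * 1 := (mul_one _).symm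
        _ ≤ |δ| * |(n:ℝ) - (n':ℝ)| := by
            apply mul_le_mul_of_nonneg_left _ (abs_nonneg _)
            linarith [hint1 n n' hn]
    · apply hd1 _ _ _
      have : (X₃ + ((m:ℝ), β * (m:ℝ) + δ * (n:ℝ))).1
          - (X₃ + ((m':ℝ), β * (m':ℝ) + δ * (n':ℝ))).1 = (m:ℝ) - (m':ℝ) := by
        simp [Prod.fst_add]
      rw [this]
      exact le_trans hδ₀h (hint m m' hm)
  have h23 : ∀ m n m' n' : ℤ,
      δ₀ ≤ dist (X₂ + (γ * (m:ℝ) + α * (n:ℝ), (n:ℝ)) : ℝ × ℝ)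
        (X₃ + ((m':ℝ), β * (m':ℝ) + δ * (n':ℝ))) := by
    intro m n m' n'
    set x : ℝ × ℝ := X₂ + (γ * (m:ℝ) + α * (n:ℝ), (n:ℝ)) with hx_def
    set y : ℝ × ℝ := X₃ + ((m':ℝ), β * (m':ℝ) + δ * (n':ℝ)) with hy_def
    set K : ℤ := r.num * (m - n) - (r.den : ℤ) * (m' - n') with hK
    have hφ : (x.1 - y.1) - t * (x.2 - y.2) = c * ((K:ℝ) + 1/2) := by
      have hx1 : x.1 = 1/2 + t/2 + c/2 + (γ * (m:ℝ) + α * (n:ℝ)) := by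
        rw [hx_def, hX₂]; simp [Prod.fst_add]
      have hx2 : x.2 = 1/2 + (n:ℝ) := by
        rw [hx_def, hX₂]; simp [Prod.snd_add]
      have hy1 : y.1 = 1/2 + (m':ℝ) := by
        rw [hy_def, hX₃]; simp [Prod.fst_add]
      have hy2 : y.2 = β * (m':ℝ) + δ * (n':ℝ) := by
        rw [hy_def, hX₃]; simp [Prod.snd_add]
      rw [hx1, hx2, hy1, hy2, hK]
      push_cast
      have hα' : α = t - γ := by rw [ht_def]; ring
      rw [hα']
      linear_combination ((m:ℝ) - n) * hγnum + ((n':ℝ) - m') * hδtden + (m':ℝ) * h2'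
    have hlow : |c| / 2 ≤ |(x.1 - y.1) - t * (x.2 - y.2)| := by
      rw [hφ, abs_mul]
      have := mul_le_mul_of_nonneg_left (hhalf K) (abs_nonneg c)
      linarith
    have hup : |(x.1 - y.1) - t * (x.2 - y.2)| ≤ (1 + |t|) * dist x y := by
      have e1 : |x.1 - y.1| ≤ dist x y := by
        rw [Prod.dist_eq, ← Real.dist_eq]; exact le_max_left _ _
      have e2 : |x.2 - y.2| ≤ dist x y := by
        rw [Prod.dist_eq, ← Real.dist_eq]; exact le_max_right _ _
      calc |(x.1 - y.1) - t * (x.2 - y.2)| ≤ |x.1 - y.1| + |t * (x.2 - y.2)| := abs_sub _ _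
        _ = |x.1 - y.1| + |t| * |x.2 - y.2| := by rw [abs_mul]
        _ ≤ dist x y + |t| * dist x y := by
            have := mul_le_mul_of_nonneg_left e2 (abs_nonneg t)
            linarith
        _ = (1 + |t|) * dist x y := by ring
    have hpos : (0:ℝ) < 2 * (1 + |t|) := by positivity
    refine le_trans hδ₀c ?_
    rw [div_le_iff₀ hpos]
    calc |c| ≤ 2 * |(x.1 - y.1) - t * (x.2 - y.2)| := by linarith
      _ ≤ 2 * ((1 + |t|) * dist x y) := by linarith
      _ = dist x y * (2 * (1 + |t|)) := by ring
  -- main case analysis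
  intro x hx y hy hxy
  rcases hx with (hx | hx) | hx <;> rcases hy with (hy | hy) | hy
  · obtain ⟨m, n, rfl⟩ := hx; obtain ⟨m', n', rfl⟩ := hy
    exact h11 m n m' n' hxy
  · obtain ⟨m, n, rfl⟩ := hx; obtain ⟨v, ⟨m', n', rfl⟩, rfl⟩ := hy
    exact h12 m n m' n'
  · obtain ⟨m, n, rfl⟩ := hx; obtain ⟨v, ⟨m', n', rfl⟩, rfl⟩ := hy
    exact h13 m n m' n'
  · obtain ⟨v, ⟨m, n, rfl⟩, rfl⟩ := hx; obtain ⟨m', n', rfl⟩ := hy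
    rw [dist_comm]; exact h12 m' n' m n
  · obtain ⟨v, ⟨m, n, rfl⟩, rfl⟩ := hx; obtain ⟨v', ⟨m', n', rfl⟩, rfl⟩ := hy
    exact h22 m n m' n' hxy
  · obtain ⟨v, ⟨m, n, rfl⟩, rfl⟩ := hx; obtain ⟨v', ⟨m', n', rfl⟩, rfl⟩ := hy
    exact h23 m n m' n'
  · obtain ⟨v, ⟨m, n, rfl⟩, rfl⟩ := hx; obtain ⟨m', n', rfl⟩ := hy
    rw [dist_comm]; exact h13 m' n' m n
  · obtain ⟨v, ⟨m, n, rfl⟩, rfl⟩ := hx; obtain ⟨v', ⟨m', n', rfl⟩, rfl⟩ := hy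
    rw [dist_comm]; exact h23 m' n' m n
  · obtain ⟨v, ⟨m, n, rfl⟩, rfl⟩ := hx; obtain ⟨v', ⟨m', n', rfl⟩, rfl⟩ := hy
    exact h33 m n m' n' hxy

end
end

section
/- Let α, β, γ, δ be nonzero real numbers such that for every η > 0 there is c₀ > 0 with ⟨Pα + Qγ⟩ ≥ c₀·max(|P|,|Q|)^{−(2+η)} and ⟨Pβ + Qδ⟩ ≥ c₀·max(|P|,|Q|)^{−(2+η)} for all integers P, Q not both zero, where ⟨·⟩ denotes distance to the nearest integer. Let Λ₁ = ℤ², Λ₂ = [[γ, α],[0, 1]]·ℤ² and Λ₃ = [[1, 0],[β, δ]]·ℤ². Then for every η > 0 there is c > 0 such that for every ε > 0, every x ∈ ℝ², every M > c/ε^{5+η}, every σ ∈ [−1, 1] and every y ∈ ℝ²: the set Λ₁ ∪ (x + Λ₂) contains a point within distance ε of the segment {y + t·(σ, 1)ᵀ : t ∈ [0, M]}, and the set Λ₁ ∪ (x + Λ₃) contains a point within distance ε of the segment {y + t·(1, σ)ᵀ : t ∈ [0, M]}. -/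
/-!
Along either segment the rows of each lattice are crossed at unit steps of `t`, and the offsets
of the crossing points from the lattice points of the row form an arithmetic progression: `a + kσ`
modulo `1` for `ℤ²`, and `b + k (σ - α) / γ` modulo `γ` for `x + Λ₂`. By Dirichlet's theorem a
progression of length `n` either comes `ε`-close to an integer, or its step lies within
`1 / (n + 1)` of a fraction `p / q` with `q < 1 / ε`. If both progressions failed, the two
approximations `σ ≈ p / q` and `(σ - α) / γ ≈ p' / q'` would combine into the integer vector
`(q q', q p')` of height `O(ε⁻²)` with `⟨q q' α + q p' γ⟩ = O(1 / (ε n))`, which the Diophantine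
bound with exponent `e = 2 + η / 2` forbids once `n ≫ ε^-(1 + 2e) = ε^-(5 + η)`. Swapping
coordinates turns the nearly horizontal case for `Λ₃` into the nearly vertical one.
-/

open Set

noncomputable section

lemma intDist_le_abs_sub (x : ℝ) (m : ℤ) : intDist x ≤ |x - m| := round_le x m

lemma exists_intDist_add_mul_le_of_isCoprime (θ a : ℝ) {p : ℤ} {q : ℕ} (hq : 0 < q)
    (hpq : IsCoprime p q) :
    ∃ k < q, intDist (a + k * θ) ≤ 1 / (2 * q) + |q * θ - p| := by
  obtain ⟨u, v, huv⟩ := hpq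
  set r := round (q * a)
  have hq' : (0 : ℤ) < q := by exact_mod_cast hq
  -- `k ≡ -r u (mod q)` makes `r + k p` a multiple of `q`
  set k : ℤ := -r * u % q
  have hk0 : 0 ≤ k := Int.emod_nonneg _ hq'.ne'
  have hkq : k < q := Int.emod_lt_of_pos _ hq'
  obtain ⟨w, hw⟩ : (q : ℤ) ∣ r + k * p :=
    ⟨r * v - (-r * u / q) * p, by
      show r + (-r * u % q) * p = _
      rw [Int.emod_def]; linear_combination (-r) * huv⟩
  have hqR : (0 : ℝ) < q := by exact_mod_cast hq
  have hkR : (k.toNat : ℝ) = k := by exact_mod_cast Int.toNat_of_nonneg hk0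
  have hkqR : (k : ℝ) ≤ q := by exact_mod_cast hkq.le
  have hsplit : a + k * θ - w = (q * a - r) / q + k / q * (q * θ - p) := by
    have hwR : (r : ℝ) + k * p = q * w := by exact_mod_cast hw
    field_simp
    linear_combination hwR
  refine ⟨k.toNat, by omega, ?_⟩
  rw [hkR]
  calc intDist (a + k * θ) ≤ |a + k * θ - w| := intDist_le_abs_sub _ _
    _ ≤ |(q * a - r) / q| + |k / q * (q * θ - p)| := hsplit ▸ abs_add_le _ _
    _ = |q * a - r| / q + k / q * |q * θ - p| := by
      have hk0R : (0 : ℝ) ≤ k := by exact_mod_cast hk0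
      rw [abs_div, abs_mul, abs_of_pos hqR, abs_of_nonneg (div_nonneg hk0R hqR.le)]
    _ ≤ (1 / 2) / q + 1 * |q * θ - p| := by
      gcongr
      · exact abs_sub_round _
      · exact div_le_one_of_le₀ hkqR hqR.le
    _ = 1 / (2 * q) + |q * θ - p| := by rw [div_div, one_mul]

lemma intDist_le_or_exists_approx (θ a : ℝ) {ρ : ℝ} {n : ℕ} (hρ : 0 < ρ) (hn : 2 / ρ ≤ n) :
    (∃ k < n, intDist (a + k * θ) ≤ ρ) ∨
      ∃ p : ℤ, ∃ q : ℕ, 0 < q ∧ (q : ℝ) < 1 / ρ ∧ |q * θ - p| ≤ 1 / (n + 1) := by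
  have hn0 : 0 < n := by exact_mod_cast (div_pos two_pos hρ).trans_le hn
  obtain ⟨r, hr, hden⟩ := Real.exists_rat_abs_sub_le_and_den_le θ hn0
  have hdenR : (0 : ℝ) < r.den := by exact_mod_cast r.pos
  have happrox : |r.den * θ - r.num| ≤ 1 / (n + 1) := by
    have : (r.den : ℝ) * θ - r.num = r.den * (θ - r) := by
      rw [Rat.cast_def]; field_simp
    rw [this, abs_mul, abs_of_pos hdenR]
    calc r.den * |θ - r| ≤ r.den * (1 / ((n + 1) * r.den)) := by gcongr
      _ = 1 / (n + 1) := by field_simp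
  by_cases hsmall : (r.den : ℝ) < 1 / ρ
  · exact Or.inr ⟨r.num, r.den, r.pos, hsmall, happrox⟩
  obtain ⟨k, hk, hkd⟩ := exists_intDist_add_mul_le_of_isCoprime θ a r.pos r.isCoprime_num_den
  refine Or.inl ⟨k, hk.trans_le hden, hkd.trans ?_⟩
  have h₁ : 1 / (2 * (r.den : ℝ)) ≤ ρ / 2 := by
    rw [not_lt, div_le_iff₀ hρ] at hsmall
    rw [div_le_div_iff₀ (by positivity) two_pos]
    nlinarith
  have h₂ : 1 / ((n : ℝ) + 1) ≤ ρ / 2 := by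
    rw [div_le_div_iff₀ (by positivity) two_pos]
    rw [div_le_iff₀ hρ] at hn
    nlinarith
  linarith

def DiophantineBound (c₀ e α γ : ℝ) : Prop :=
  ∀ P Q : ℤ, ¬(P = 0 ∧ Q = 0) →
    c₀ * (max |(P : ℝ)| |(Q : ℝ)|) ^ (-e) ≤ intDist ((P : ℝ) * α + (Q : ℝ) * γ)

section SimultaneousApproximation

variable {c₀ e α γ σ ε : ℝ}

lemma intDist_le_of_approx (hγ : γ ≠ 0) (p p' q q' : ℤ) :
    intDist (((q * q' : ℤ) : ℝ) * α + ((q * p' : ℤ) : ℝ) * γ) ≤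
      |(q' : ℝ)| * |q * σ - p| + |(q : ℝ)| * |γ| * |q' * ((σ - α) / γ) - p'| := by
  calc _ ≤ |((q * q' : ℤ) : ℝ) * α + ((q * p' : ℤ) : ℝ) * γ - ((p * q' : ℤ) : ℝ)| :=
        intDist_le_abs_sub _ _
    _ = |q' * (q * σ - p) - q * γ * (q' * ((σ - α) / γ) - p')| := by
        congr 1; push_cast; field_simp; ring
    _ ≤ |q' * (q * σ - p)| + |q * γ * (q' * ((σ - α) / γ) - p')| := abs_sub _ _
    _ = _ := by simp only [abs_mul]

lemma max_abs_le_of_approx {ε : ℝ} (hγ : γ ≠ 0) (hε : 0 < ε) (hε1 : ε ≤ 1) (hσ : |σ| ≤ 1)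
    {p' : ℤ} {q q' : ℕ} (hqε : (q : ℝ) < 1 / ε) (hq'ε : (q' : ℝ) < |γ| / ε)
    (happ' : |q' * ((σ - α) / γ) - p'| ≤ 1) :
    max |(q : ℝ) * q'| |(q : ℝ) * p'| ≤ (|α| + |γ| + 2) / ε ^ 2 := by
  have hγ' : 0 < |γ| := abs_pos.mpr hγ
  have hinv : 1 / ε ≤ 1 / ε ^ 2 := one_div_le_one_div_of_le (by positivity) (by nlinarith)
  have hp' : |(p' : ℝ)| ≤ (1 + |α|) / ε + 1 := by
    have hT : |(σ - α) / γ| ≤ (1 + |α|) / |γ| := by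
      rw [abs_div]; gcongr; exact (abs_sub _ _).trans (by linarith)
    calc |(p' : ℝ)| ≤ |q' * ((σ - α) / γ)| + |q' * ((σ - α) / γ) - p'| := by
          linarith [abs_sub_abs_le_abs_sub (p' : ℝ) (q' * ((σ - α) / γ)),
            abs_sub_comm (p' : ℝ) (q' * ((σ - α) / γ))]
      _ ≤ |γ| / ε * ((1 + |α|) / |γ|) + 1 := by
        rw [abs_mul, Nat.abs_cast]; gcongr
      _ = (1 + |α|) / ε + 1 := by field_simp
  rw [abs_mul, abs_mul, Nat.abs_cast, Nat.abs_cast]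
  apply max_le
  · calc (q : ℝ) * q' ≤ 1 / ε * (|γ| / ε) := by gcongr
      _ = |γ| / ε ^ 2 := by ring
      _ ≤ _ := by gcongr; linarith [abs_nonneg α]
  · calc (q : ℝ) * |(p' : ℝ)| ≤ 1 / ε * ((1 + |α|) / ε + 1) := by gcongr
      _ = (1 + |α|) / ε ^ 2 + 1 / ε := by ring
      _ ≤ (1 + |α|) / ε ^ 2 + 1 / ε ^ 2 := by gcongr
      _ ≤ _ := by rw [← add_div]; exact div_le_div_of_nonneg_right (by linarith) (by positivity)

lemma rpow_one_add_two_mul_eq {A : ℝ} (hε : 0 < ε) (hA : 0 < A) :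
    ε ^ (1 + 2 * e) = (A / ε ^ 2) ^ (-e) * (A ^ e * ε) := by
  rw [Real.rpow_neg (by positivity), Real.div_rpow hA.le (by positivity), Real.rpow_add hε,
    Real.rpow_one, Real.rpow_mul hε.le, Real.rpow_two]
  have : 0 < A ^ e := Real.rpow_pos_of_pos hA e
  field_simp

lemma DiophantineBound.mul_rpow_le_of_approx (hdio : DiophantineBound c₀ e α γ) (hc₀ : 0 ≤ c₀)
    (he : 0 ≤ e) (hγ : γ ≠ 0) (hε : 0 < ε) (hε1 : ε ≤ 1) (hσ : |σ| ≤ 1) {δ : ℝ} (hδ1 : δ ≤ 1)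
    {p p' : ℤ} {q q' : ℕ} (hq : 0 < q) (hq' : 0 < q') (hqε : (q : ℝ) < 1 / ε)
    (hq'ε : (q' : ℝ) < |γ| / ε) (happ : |q * σ - p| ≤ δ)
    (happ' : |q' * ((σ - α) / γ) - p'| ≤ δ) :
    c₀ * ε ^ (1 + 2 * e) ≤ 2 * |γ| * (|α| + |γ| + 2) ^ e * δ := by
  set A := |α| + |γ| + 2
  have hA : 0 < A := by positivity
  have hP : (q * q' : ℤ) ≠ 0 := mul_ne_zero (by exact_mod_cast hq.ne') (by exact_mod_cast hq'.ne')
  set X := max |(((q * q' : ℤ)) : ℝ)| |(((q * p' : ℤ)) : ℝ)|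
  have hX : X ≤ A / ε ^ 2 := by
    simpa only [X, Int.cast_mul, Int.cast_natCast] using
      max_abs_le_of_approx hγ hε hε1 hσ hqε hq'ε (happ'.trans hδ1)
  have hX0 : 0 < X := lt_max_of_lt_left (abs_pos.mpr (by exact_mod_cast hP))
  have hup : intDist (((q * q' : ℤ) : ℝ) * α + ((q * p' : ℤ) : ℝ) * γ) ≤ 2 * |γ| * δ / ε := by
    refine (intDist_le_of_approx (σ := σ) hγ p p' q q').trans ?_
    simp only [Int.cast_natCast, Nat.abs_cast]
    calc (q' : ℝ) * |q * σ - p| + q * |γ| * |q' * ((σ - α) / γ) - p'|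
        ≤ |γ| / ε * δ + 1 / ε * |γ| * δ := by gcongr
      _ = 2 * |γ| * δ / ε := by ring
  calc c₀ * ε ^ (1 + 2 * e) = c₀ * (A / ε ^ 2) ^ (-e) * (A ^ e * ε) := by
        rw [rpow_one_add_two_mul_eq hε hA, mul_assoc]
    _ ≤ c₀ * X ^ (-e) * (A ^ e * ε) := by
        have := Real.rpow_le_rpow_of_nonpos hX0 hX (neg_nonpos.mpr he)
        gcongr
    _ ≤ 2 * |γ| * δ / ε * (A ^ e * ε) := by gcongr; exact (hdio _ _ (fun h => hP h.1)).trans hup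
    _ = 2 * |γ| * A ^ e * δ := by field_simp

lemma DiophantineBound.exists_intDist_le (hdio : DiophantineBound c₀ e α γ) (hc₀ : 0 ≤ c₀)
    (he : 0 ≤ e) (hγ : γ ≠ 0) (hε : 0 < ε) (hε1 : ε ≤ 1) (hσ : |σ| ≤ 1) {n : ℕ}
    (hn : 2 / ε ≤ n) (hnγ : 2 * |γ| / ε ≤ n)
    (hlarge : 2 * |γ| * (|α| + |γ| + 2) ^ e < c₀ * ε ^ (1 + 2 * e) * (n + 1)) (a b : ℝ) :
    (∃ k < n, intDist (a + k * σ) ≤ ε) ∨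
      ∃ k < n, |γ| * intDist (b + k * ((σ - α) / γ)) ≤ ε := by
  have hγ' : 0 < |γ| := abs_pos.mpr hγ
  rcases intDist_le_or_exists_approx σ a hε hn with hit | ⟨p, q, hq, hqε, happ⟩
  · exact Or.inl hit
  have hnγ' : 2 / (ε / |γ|) ≤ n := by rwa [div_div_eq_mul_div]
  rcases intDist_le_or_exists_approx ((σ - α) / γ) b (by positivity) hnγ'
    with ⟨k, hk, hit⟩ | ⟨p', q', hq', hq'ε, happ'⟩
  · exact Or.inr ⟨k, hk, by rwa [le_div_iff₀' hγ'] at hit⟩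
  rw [one_div_div] at hq'ε
  have hδ1 : 1 / ((n : ℝ) + 1) ≤ 1 := by
    rw [div_le_one (by positivity)]; linarith [n.cast_nonneg (α := ℝ)]
  have := hdio.mul_rpow_le_of_approx hc₀ he hγ hε hε1 hσ hδ1 hq hq' hqε hq'ε happ happ'
  rw [mul_one_div, le_div_iff₀ (by positivity)] at this
  exact absurd this (not_le.mpr hlarge)

end SimultaneousApproximation

lemma exists_nat_le_of_div_rpow_lt {c₀ K L s ε M : ℝ} (hc₀ : 0 < c₀) (hK : 0 ≤ K) (hL : 0 ≤ L)
    (hs : 1 ≤ s) (hε : 0 < ε) (hε1 : ε ≤ 1) (hM : (K / c₀ + 2 * L + 3) / ε ^ s < M) :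
    ∃ n : ℕ, (n : ℝ) ≤ M ∧ 2 / ε ≤ n ∧ 2 * L / ε ≤ n ∧ K < c₀ * ε ^ s * (n + 1) := by
  set D := K / c₀ + 2 * L + 3 with hD_def
  have hKc : 0 ≤ K / c₀ := div_nonneg hK hc₀.le
  have hεs : 0 < ε ^ s := Real.rpow_pos_of_pos hε s
  have hεsε : ε ^ s ≤ ε := by simpa using Real.rpow_le_rpow_of_exponent_ge hε hε1 hs
  have hM0 : 0 ≤ M := (div_pos (by positivity) hεs).le.trans hM.le
  have hfloor : M < ⌊M⌋₊ + 1 := Nat.lt_floor_add_one M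
  have hn : (D - 1) / ε ≤ ⌊M⌋₊ := by
    have h1 : D / ε ≤ D / ε ^ s := div_le_div_of_nonneg_left (by linarith) hεs hεsε
    have h2 : 1 ≤ 1 / ε := by rw [le_div_iff₀ hε]; linarith
    rw [sub_div]
    linarith
  refine ⟨⌊M⌋₊, Nat.floor_le hM0, ?_, ?_, ?_⟩
  · exact (div_le_div_of_nonneg_right (by linarith) hε.le).trans hn
  · exact (div_le_div_of_nonneg_right (by linarith) hε.le).trans hn
  · have h : D < (⌊M⌋₊ + 1) * ε ^ s := by rw [← div_lt_iff₀ hεs]; linarith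
    have h' : K / c₀ < (⌊M⌋₊ + 1) * ε ^ s := by linarith
    rw [div_lt_iff₀ hc₀] at h'
    linarith

-- The paper's `Λ₂ = [[γ, α], [0, 1]] ℤ²` is `upperTriLattice α γ`, its `Λ₃ = [[1, 0], [β, δ]] ℤ²`
-- is `lowerTriLattice β δ`.
def intLattice : Set (ℝ × ℝ) := {v | ∃ m n : ℤ, v = ((m : ℝ), (n : ℝ))}

def upperTriLattice (α γ : ℝ) : Set (ℝ × ℝ) :=
  {v | ∃ m n : ℤ, v = (γ * (m : ℝ) + α * (n : ℝ), (n : ℝ))}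

def lowerTriLattice (β δ : ℝ) : Set (ℝ × ℝ) :=
  {v | ∃ m n : ℤ, v = ((m : ℝ), β * (m : ℝ) + δ * (n : ℝ))}

lemma intLattice_eq_upperTriLattice : intLattice = upperTriLattice 0 1 := by
  ext v; simp [intLattice, upperTriLattice]

lemma exists_mem_intLattice_dist_le (p : ℝ × ℝ) : ∃ z ∈ intLattice, dist p z ≤ 1 / 2 :=
  ⟨((round p.1 : ℤ), (round p.2 : ℤ)), ⟨_, _, rfl⟩, by
    rw [Prod.dist_eq, Real.dist_eq, Real.dist_eq]
    exact max_le (abs_sub_round _) (abs_sub_round _)⟩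

lemma exists_dist_le_mul_intDist {α γ : ℝ} (hγ : γ ≠ 0) (x y : ℝ × ℝ) (σ M : ℝ) {n : ℤ}
    (hn₀ : y.2 - x.2 ≤ n) (hnM : n ≤ y.2 - x.2 + M) :
    ∃ t ∈ Icc 0 M, ∃ z ∈ (fun v => x + v) '' upperTriLattice α γ,
      dist (y + t • ((σ, 1) : ℝ × ℝ)) z ≤
        |γ| * intDist ((y.1 - x.1 + (x.2 - y.2) * σ + n * (σ - α)) / γ) := by
  set u := (y.1 - x.1 + (x.2 - y.2) * σ + n * (σ - α)) / γ
  refine ⟨x.2 + n - y.2, ⟨by linarith, by linarith⟩, x + (γ * round u + α * n, (n : ℝ)),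
    ⟨_, ⟨round u, n, rfl⟩, rfl⟩, ?_⟩
  have h₁ : y.1 + (x.2 + n - y.2) * σ - (x.1 + (γ * round u + α * n)) = γ * (u - round u) := by
    simp only [u]; field_simp; ring
  have h₂ : y.2 + (x.2 + n - y.2) * 1 - (x.2 + n) = 0 := by ring
  rw [Prod.dist_eq, Real.dist_eq, Real.dist_eq]
  simp only [Prod.fst_add, Prod.snd_add, Prod.smul_mk, smul_eq_mul]
  rw [h₁, h₂, abs_zero, abs_mul]
  exact max_le le_rfl (mul_nonneg (abs_nonneg _) (abs_nonneg _))

lemma exists_intLattice_dist_le_intDist (y : ℝ × ℝ) (σ M : ℝ) {n : ℤ} (hn₀ : y.2 ≤ n)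
    (hnM : n ≤ y.2 + M) :
    ∃ t ∈ Icc 0 M, ∃ z ∈ intLattice, dist (y + t • ((σ, 1) : ℝ × ℝ)) z ≤
      intDist (y.1 + (n - y.2) * σ) := by
  obtain ⟨t, ht, z, hz, hd⟩ :=
    exists_dist_le_mul_intDist (α := 0) one_ne_zero 0 y σ M (by simpa using hn₀)
      (by simpa using hnM)
  refine ⟨t, ht, z, by simpa [intLattice_eq_upperTriLattice] using hz, hd.trans_eq ?_⟩
  simp only [Prod.fst_zero, Prod.snd_zero, abs_one, one_mul, div_one]
  ring_nf

lemma swap_mem_intLattice_union {β δ : ℝ} {x z : ℝ × ℝ}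
    (hz : z ∈ intLattice ∪ (fun v => x.swap + v) '' upperTriLattice β δ) :
    z.swap ∈ intLattice ∪ (fun v => x + v) '' lowerTriLattice β δ := by
  rcases hz with ⟨m, n, rfl⟩ | ⟨_, ⟨m, n, rfl⟩, rfl⟩
  · exact Or.inl ⟨n, m, rfl⟩
  · exact Or.inr ⟨(n, β * n + δ * m), ⟨n, m, rfl⟩, by ext <;> simp [add_comm]⟩

section NearSegments

variable {c₀ e α γ : ℝ}

theorem DiophantineBound.exists_near_vertical_segment (hdio : DiophantineBound c₀ e α γ)
    (hc₀ : 0 < c₀) (he : 0 ≤ e) (hγ : γ ≠ 0) :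
    ∃ C > 0, ∀ ε > 0, ∀ M > C / ε ^ (1 + 2 * e), ∀ σ, |σ| ≤ 1 → ∀ x y : ℝ × ℝ,
      ∃ t ∈ Icc 0 M, ∃ z ∈ intLattice ∪ (fun v => x + v) '' upperTriLattice α γ,
        dist (y + t • ((σ, 1) : ℝ × ℝ)) z ≤ ε := by
  set K := 2 * |γ| * (|α| + |γ| + 2) ^ e
  have hK : 0 ≤ K := by positivity
  refine ⟨K / c₀ + 2 * |γ| + 3, by positivity, fun ε hε M hM σ hσ x y => ?_⟩
  rcases lt_or_ge 1 ε with hε1 | hε1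
  · have hM0 : 0 < M := (div_pos (by positivity) (Real.rpow_pos_of_pos hε _)).trans hM
    obtain ⟨z, hz, hd⟩ := exists_mem_intLattice_dist_le y
    exact ⟨0, ⟨le_rfl, hM0.le⟩, z, Or.inl hz, by simpa using hd.trans (by linarith)⟩
  obtain ⟨n, hnM, hn, hnγ, hlarge⟩ :=
    exists_nat_le_of_div_rpow_lt hc₀ hK (abs_nonneg γ) (by linarith) hε hε1 hM
  have hrow : ∀ h : ℝ, ∀ k < n, h ≤ ((⌈h⌉ + k : ℤ) : ℝ) ∧ ((⌈h⌉ + k : ℤ) : ℝ) ≤ h + M := by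
    intro h k hk
    have : (k : ℝ) + 1 ≤ n := by exact_mod_cast hk
    push_cast
    constructor <;> linarith [Int.le_ceil h, Int.ceil_lt_add_one h, k.cast_nonneg (α := ℝ)]
  rcases hdio.exists_intDist_le hc₀.le he hγ hε hε1 hσ hn hnγ hlarge (y.1 + (⌈y.2⌉ - y.2) * σ)
      ((y.1 - x.1 + (x.2 - y.2) * σ + ⌈y.2 - x.2⌉ * (σ - α)) / γ)
    with ⟨k, hk, hit⟩ | ⟨k, hk, hit⟩
  · obtain ⟨t, ht, z, hz, hd⟩ :=
      exists_intLattice_dist_le_intDist y σ M (hrow _ k hk).1 (hrow _ k hk).2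
    refine ⟨t, ht, z, Or.inl hz, hd.trans (le_of_eq_of_le ?_ hit)⟩
    push_cast; ring_nf
  · obtain ⟨t, ht, z, hz, hd⟩ :=
      exists_dist_le_mul_intDist hγ x y σ M (hrow _ k hk).1 (hrow _ k hk).2
    refine ⟨t, ht, z, Or.inr hz, hd.trans (le_of_eq_of_le ?_ hit)⟩
    push_cast; field_simp; ring_nf

theorem DiophantineBound.exists_near_horizontal_segment (hdio : DiophantineBound c₀ e α γ)
    (hc₀ : 0 < c₀) (he : 0 ≤ e) (hγ : γ ≠ 0) :
    ∃ C > 0, ∀ ε > 0, ∀ M > C / ε ^ (1 + 2 * e), ∀ σ, |σ| ≤ 1 → ∀ x y : ℝ × ℝ,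
      ∃ t ∈ Icc 0 M, ∃ z ∈ intLattice ∪ (fun v => x + v) '' lowerTriLattice α γ,
        dist (y + t • ((1, σ) : ℝ × ℝ)) z ≤ ε := by
  obtain ⟨C, hC, h⟩ := hdio.exists_near_vertical_segment hc₀ he hγ
  refine ⟨C, hC, fun ε hε M hM σ hσ x y => ?_⟩
  obtain ⟨t, ht, z, hz, hd⟩ := h ε hε M hM σ hσ x.swap y.swap
  refine ⟨t, ht, z.swap, swap_mem_intLattice_union hz, ?_⟩
  simpa [Prod.dist_eq, max_comm] using hd

end NearSegments

theorem visibility_for_lattice_pairs_general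
    (α β γ δ : ℝ) (hγ : γ ≠ 0) (hδ : δ ≠ 0)
    (hdio : ∀ η : ℝ, 0 < η → ∃ c₀ > (0 : ℝ), ∀ P Q : ℤ, ¬(P = 0 ∧ Q = 0) →
      c₀ * (max |(P : ℝ)| |(Q : ℝ)|) ^ (-(2 + η)) ≤ intDist ((P : ℝ) * α + (Q : ℝ) * γ) ∧
      c₀ * (max |(P : ℝ)| |(Q : ℝ)|) ^ (-(2 + η)) ≤ intDist ((P : ℝ) * β + (Q : ℝ) * δ)) :
    ∀ η : ℝ, 0 < η → ∃ c > (0 : ℝ), ∀ ε : ℝ, 0 < ε → ∀ x : ℝ × ℝ, ∀ M : ℝ,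
      M > c / ε ^ (5 + η) → ∀ σ ∈ Set.Icc (-1 : ℝ) 1, ∀ y : ℝ × ℝ,
      (∃ t ∈ Set.Icc (0 : ℝ) M,
        ∃ z ∈ ({v : ℝ × ℝ | ∃ m n : ℤ, v = ((m : ℝ), (n : ℝ))} ∪
          (fun v => x + v) ''
            {v : ℝ × ℝ | ∃ m n : ℤ, v = (γ * (m : ℝ) + α * (n : ℝ), (n : ℝ))}),
          dist (y + t • ((σ, 1) : ℝ × ℝ)) z ≤ ε) ∧
      (∃ t ∈ Set.Icc (0 : ℝ) M,
        ∃ z ∈ ({v : ℝ × ℝ | ∃ m n : ℤ, v = ((m : ℝ), (n : ℝ))} ∪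
          (fun v => x + v) ''
            {v : ℝ × ℝ | ∃ m n : ℤ, v = ((m : ℝ), β * (m : ℝ) + δ * (n : ℝ))}),
          dist (y + t • ((1, σ) : ℝ × ℝ)) z ≤ ε) := by
  intro η hη
  obtain ⟨c₀, hc₀, hbound⟩ := hdio (η / 2) (by positivity)
  have he : (0 : ℝ) ≤ 2 + η / 2 := by positivity
  obtain ⟨C₂, hC₂, hvert⟩ := DiophantineBound.exists_near_vertical_segment
    (fun P Q hPQ => (hbound P Q hPQ).1) hc₀ he hγ
  obtain ⟨C₃, hC₃, hhoriz⟩ := DiophantineBound.exists_near_horizontal_segment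
    (fun P Q hPQ => (hbound P Q hPQ).2) hc₀ he hδ
  rw [show 1 + 2 * (2 + η / 2) = 5 + η by ring] at hvert hhoriz
  refine ⟨max C₂ C₃, lt_max_of_lt_left hC₂, fun ε hε x M hM σ hσ y => ?_⟩
  have hσ' : |σ| ≤ 1 := abs_le.mpr hσ
  have hM₂ : M > C₂ / ε ^ (5 + η) := lt_of_le_of_lt (by gcongr; exact le_max_left _ _) hM
  have hM₃ : M > C₃ / ε ^ (5 + η) := lt_of_le_of_lt (by gcongr; exact le_max_right _ _) hM
  exact ⟨hvert ε hε M hM₂ σ hσ' x y, hhoriz ε hε M hM₃ σ hσ' x y⟩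

/-- **Visibility for two of the three lattices.** Let `α, β, γ, δ` be nonzero reals
such that for every `η > 0` there is `c₀ > 0` with
`⟨Pα + Qγ⟩ ≥ c₀ max(|P|,|Q|)^{-(2+η)}` and `⟨Pβ + Qδ⟩ ≥ c₀ max(|P|,|Q|)^{-(2+η)}`
for all integers `P, Q` not both zero. With `Λ₁ = ℤ²`, `Λ₂ = [[γ, α],[0, 1]]·ℤ²`,
`Λ₃ = [[1, 0],[β, δ]]·ℤ²`: for every `η > 0` there is `c > 0` such that for every
`ε > 0`, every `x ∈ ℝ²`, every `M > c/ε^{5+η}` and every slope `σ ∈ [-1, 1]`,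
the set `Λ₁ ∪ (x + Λ₂)` comes within `ε` of every nearly vertical segment
`{y + t(σ,1) : t ∈ [0,M]}`, and `Λ₁ ∪ (x + Λ₃)` comes within `ε` of every nearly
horizontal segment `{y + t(1,σ) : t ∈ [0,M]}`. -/
theorem visibility_for_lattice_pairs
    (α β γ δ : ℝ) (hα : α ≠ 0) (hβ : β ≠ 0) (hγ : γ ≠ 0) (hδ : δ ≠ 0)
    (hdio : ∀ η : ℝ, 0 < η → ∃ c₀ > (0 : ℝ), ∀ P Q : ℤ, ¬(P = 0 ∧ Q = 0) →
      c₀ * (max |(P : ℝ)| |(Q : ℝ)|) ^ (-(2 + η)) ≤ intDist ((P : ℝ) * α + (Q : ℝ) * γ) ∧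
      c₀ * (max |(P : ℝ)| |(Q : ℝ)|) ^ (-(2 + η)) ≤ intDist ((P : ℝ) * β + (Q : ℝ) * δ)) :
    ∀ η : ℝ, 0 < η → ∃ c > (0 : ℝ), ∀ ε : ℝ, 0 < ε → ∀ x : ℝ × ℝ, ∀ M : ℝ,
      M > c / ε ^ (5 + η) → ∀ σ ∈ Set.Icc (-1 : ℝ) 1, ∀ y : ℝ × ℝ,
      (∃ t ∈ Set.Icc (0 : ℝ) M,
        ∃ z ∈ ({v : ℝ × ℝ | ∃ m n : ℤ, v = ((m : ℝ), (n : ℝ))} ∪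
          (fun v => x + v) ''
            {v : ℝ × ℝ | ∃ m n : ℤ, v = (γ * (m : ℝ) + α * (n : ℝ), (n : ℝ))}),
          dist (y + t • ((σ, 1) : ℝ × ℝ)) z ≤ ε) ∧
      (∃ t ∈ Set.Icc (0 : ℝ) M,
        ∃ z ∈ ({v : ℝ × ℝ | ∃ m n : ℤ, v = ((m : ℝ), (n : ℝ))} ∪
          (fun v => x + v) ''
            {v : ℝ × ℝ | ∃ m n : ℤ, v = ((m : ℝ), β * (m : ℝ) + δ * (n : ℝ))}),
          dist (y + t • ((1, σ) : ℝ × ℝ)) z ≤ ε) :=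
  visibility_for_lattice_pairs_general α β γ δ hγ hδ hdio
end
end
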